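/- arXiv:1603.06916 — 12 statements merged into one kernel-verified Lean document; each statement's English description precedes it below -/
import Mathlib

section
/- Let f : ℝ^n → ℝ^n be a map admitting an invariant half-line, i.e., there exist v, η ∈ ℝ^n and γ₀ ≥ 0 such that f(v + γη) = v + (γ+1)η for all γ ≥ γ₀. If f is nonexpansive in the supremum norm, then for every x ∈ ℝ^n, limit as N → ∞ of f^N(x)/N exists and equals η. -/
/-- If `f : ℝ^n → ℝ^n` (sup norm) is nonexpansive and admits an
invariant half-line `(v, η)`, then `f^N(x)/N → η` for every `x`. -/
theorem iterates_tendsto_of_invariant_halfline (n : ℕ)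
    (f : (Fin n → ℝ) → (Fin n → ℝ))
    (v η : Fin n → ℝ) (γ₀ : ℝ) (hγ₀ : 0 ≤ γ₀)
    (hline : ∀ γ : ℝ, γ₀ ≤ γ → f (v + γ • η) = v + (γ + 1) • η)
    (hne : ∀ x y : Fin n → ℝ, ‖f x - f y‖ ≤ ‖x - y‖) :
    ∀ x : Fin n → ℝ,
      Filter.Tendsto (fun N : ℕ => (N : ℝ)⁻¹ • f^[N] x)
        Filter.atTop (nhds η) := by
  intro x
  have hiter : ∀ N : ℕ, f^[N] (v + γ₀ • η) = v + (γ₀ + N) • η := by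
    intro N
    induction N with
    | zero => simp
    | succ N ih =>
      rw [Function.iterate_succ_apply', ih,
        hline (γ₀ + N) (le_add_of_nonneg_right (Nat.cast_nonneg N))]
      congr 2
      push_cast
      ring
  have hbound : ∀ N : ℕ, ‖f^[N] x - f^[N] (v + γ₀ • η)‖ ≤ ‖x - (v + γ₀ • η)‖ := by
    intro N
    induction N with
    | zero => simp
    | succ N ih =>
      rw [Function.iterate_succ_apply', Function.iterate_succ_apply']
      exact le_trans (hne _ _) ih
  set C := ‖x - (v + γ₀ • η)‖ with hC
  have key : ∀ N : ℕ, ‖f^[N] x - (v + (γ₀ + N) • η)‖ ≤ C := by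
    intro N
    have := hbound N
    rwa [hiter N] at this
  rw [tendsto_iff_norm_sub_tendsto_zero]
  have hbd : ∀ N : ℕ, 1 ≤ N →
      ‖(N : ℝ)⁻¹ • f^[N] x - η‖ ≤ (N : ℝ)⁻¹ * (C + ‖v + γ₀ • η‖) := by
    intro N hN
    have hN0 : (N : ℝ) ≠ 0 := by positivity
    have heq : (N : ℝ)⁻¹ • f^[N] x - η
        = (N : ℝ)⁻¹ • (f^[N] x - (v + (γ₀ + N) • η)) + (N : ℝ)⁻¹ • (v + γ₀ • η) := by
      rw [← smul_add]
      have : f^[N] x - (v + (γ₀ + N) • η) + (v + γ₀ • η) = f^[N] x - (N : ℝ) • η := by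
        module
      rw [this, smul_sub, smul_smul, inv_mul_cancel₀ hN0, one_smul]
    rw [heq]
    calc ‖(N : ℝ)⁻¹ • (f^[N] x - (v + (γ₀ + N) • η)) + (N : ℝ)⁻¹ • (v + γ₀ • η)‖
        ≤ ‖(N : ℝ)⁻¹ • (f^[N] x - (v + (γ₀ + N) • η))‖ + ‖(N : ℝ)⁻¹ • (v + γ₀ • η)‖ :=
          norm_add_le _ _
      _ ≤ (N : ℝ)⁻¹ * C + (N : ℝ)⁻¹ * ‖v + γ₀ • η‖ := by
          rw [norm_smul, norm_smul, Real.norm_eq_abs,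
            abs_of_nonneg (by positivity : (0:ℝ) ≤ (N : ℝ)⁻¹)]
          exact add_le_add (mul_le_mul_of_nonneg_left (key N) (by positivity)) le_rfl
      _ = (N : ℝ)⁻¹ * (C + ‖v + γ₀ • η‖) := by ring
  have hlim : Filter.Tendsto (fun N : ℕ => (N : ℝ)⁻¹ * (C + ‖v + γ₀ • η‖))
      Filter.atTop (nhds 0) := by
    have := (tendsto_inv_atTop_zero.comp (tendsto_natCast_atTop_atTop (R := ℝ))).mul_const
      (C + ‖v + γ₀ • η‖)
    simpa using this
  refine squeeze_zero' ?_ ?_ hlim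
  · filter_upwards with N using norm_nonneg _
  · filter_upwards [Filter.eventually_atTop.2 ⟨1, fun N hN => hbd N hN⟩] with N h using h
end

section
/- Let f : ℝ^n → ℝ^n be nonexpansive in some norm and suppose f admits two invariant half-lines (v₁, η₁) and (v₂, η₂), meaning f(v_i + γη_i) = v_i + (γ+1)η_i for all γ large enough (i = 1, 2). Then η₁ = η₂. -/
/-- If `f : ℝ^n → ℝ^n` is nonexpansive in some norm `p` and admits
two invariant half-lines `(v₁, η₁)` and `(v₂, η₂)`, then `η₁ = η₂`. -/
theorem invariant_halfline_direction_unique (n : ℕ)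
    (f : (Fin n → ℝ) → (Fin n → ℝ))
    (p : (Fin n → ℝ) → ℝ)
    (hp_def : ∀ x, p x = 0 ↔ x = 0)
    (hp_add : ∀ x y, p (x + y) ≤ p x + p y)
    (hp_smul : ∀ (c : ℝ) (x), p (c • x) = |c| * p x)
    (hne : ∀ x y, p (f x - f y) ≤ p (x - y))
    (v₁ η₁ v₂ η₂ : Fin n → ℝ) (γ₁ γ₂ : ℝ) (hγ₁ : 0 ≤ γ₁) (hγ₂ : 0 ≤ γ₂)
    (hline₁ : ∀ γ : ℝ, γ₁ ≤ γ → f (v₁ + γ • η₁) = v₁ + (γ + 1) • η₁)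
    (hline₂ : ∀ γ : ℝ, γ₂ ≤ γ → f (v₂ + γ • η₂) = v₂ + (γ + 1) • η₂) :
    η₁ = η₂ := by
  set w : Fin n → ℝ := (v₁ + γ₁ • η₁) - (v₂ + γ₂ • η₂) with hw
  set d : Fin n → ℝ := η₁ - η₂ with hd
  -- nonnegativity of p
  have hp0 : p 0 = 0 := (hp_def 0).mpr rfl
  have hpneg : ∀ x, p (-x) = p x := by
    intro x
    have := hp_smul (-1) x
    simpa using this
  have hpnn : ∀ x, 0 ≤ p x := by
    intro x
    have h := hp_add x (-x)
    rw [add_neg_cancel, hp0, hpneg] at h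
    linarith
  -- key iteration bound
  have key : ∀ k : ℕ, p ((v₁ + (γ₁ + k) • η₁) - (v₂ + (γ₂ + k) • η₂)) ≤ p w := by
    intro k
    induction k with
    | zero => simp [hw]
    | succ k ih =>
      have h1 : f (v₁ + (γ₁ + k) • η₁) = v₁ + (γ₁ + (k + 1 : ℕ)) • η₁ := by
        rw [hline₁ (γ₁ + k) (le_add_of_nonneg_right (Nat.cast_nonneg k))]
        push_cast; ring_nf
      have h2 : f (v₂ + (γ₂ + k) • η₂) = v₂ + (γ₂ + (k + 1 : ℕ)) • η₂ := by
        rw [hline₂ (γ₂ + k) (le_add_of_nonneg_right (Nat.cast_nonneg k))]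
        push_cast; ring_nf
      calc p ((v₁ + (γ₁ + (k + 1 : ℕ)) • η₁) - (v₂ + (γ₂ + (k + 1 : ℕ)) • η₂))
          = p (f (v₁ + (γ₁ + k) • η₁) - f (v₂ + (γ₂ + k) • η₂)) := by rw [h1, h2]
        _ ≤ p ((v₁ + (γ₁ + k) • η₁) - (v₂ + (γ₂ + k) • η₂)) := hne _ _
        _ ≤ p w := ih
  -- rewrite: difference = w + k • d
  have keyd : ∀ k : ℕ, (k : ℝ) * p d ≤ 2 * p w := by
    intro k
    have hrw : (v₁ + (γ₁ + k) • η₁) - (v₂ + (γ₂ + k) • η₂) = w + (k : ℝ) • d := by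
      rw [hw, hd]; module
    have h1 : p (w + (k : ℝ) • d) ≤ p w := by rw [← hrw]; exact key k
    have h2 : p ((k : ℝ) • d) ≤ p (w + (k : ℝ) • d) + p (-w) := by
      have := hp_add (w + (k : ℝ) • d) (-w)
      have heq : (w + (k : ℝ) • d) + (-w) = (k : ℝ) • d := by module
      rwa [heq] at this
    rw [hp_smul, abs_of_nonneg (Nat.cast_nonneg k), hpneg] at h2
    linarith
  have hpd : p d = 0 := by
    by_contra h
    have hpos : 0 < p d := lt_of_le_of_ne (hpnn d) (Ne.symm h)
    obtain ⟨k, hk⟩ := Archimedean.arch (2 * p w) hpos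
    have : (k : ℝ) * p d ≤ 2 * p w := keyd k
    have hk' : 2 * p w ≤ (k : ℝ) * p d := by
      simpa [nsmul_eq_mul] using hk
    have : ((k + 1 : ℕ) : ℝ) * p d ≤ 2 * p w := keyd (k + 1)
    push_cast at this
    nlinarith
  have : d = 0 := (hp_def d).mp hpd
  have := sub_eq_zero.mp this
  exact this
end

section
/- Let f : ℝ^n → ℝ^n be nonexpansive in the supremum norm with an invariant half-line (v, η). Then limit as N → ∞ of max_{k ∈ [n]} f^N_k(x)/N equals max_{k ∈ [n]} η_k, for every x ∈ ℝ^n. -/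
/-- If `f : ℝ^n → ℝ^n` is sup-norm nonexpansive with an invariant
half-line `(v, η)`, then `max_k f^N_k(x)/N → max_k η_k` for every `x`. -/
theorem max_iterates_tendsto_of_invariant_halfline (n : ℕ) (hn : 0 < n)
    (f : (Fin n → ℝ) → (Fin n → ℝ))
    (hne : ∀ x y : Fin n → ℝ, ‖f x - f y‖ ≤ ‖x - y‖)
    (v η : Fin n → ℝ) (γ₀ : ℝ) (hγ₀ : 0 ≤ γ₀)
    (hline : ∀ γ : ℝ, γ₀ ≤ γ → f (v + γ • η) = v + (γ + 1) • η) :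
    ∀ x : Fin n → ℝ,
      Filter.Tendsto (fun N : ℕ => (⨆ k, f^[N] x k) / (N : ℝ))
        Filter.atTop (nhds (⨆ k, η k)) := by
  intro x
  haveI : Nonempty (Fin n) := ⟨⟨0, hn⟩⟩
  set S : ℝ := ⨆ k, η k with hS
  -- key: sup is nonexpansive for the sup norm
  have supA : ∀ u w : Fin n → ℝ, (⨆ k, u k) ≤ (⨆ k, w k) + ‖u - w‖ := by
    intro u w
    apply ciSup_le
    intro k
    have h0 : ‖(u - w) k‖ ≤ ‖u - w‖ := norm_le_pi_norm (u - w) k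
    have h1 : u k - w k ≤ ‖u - w‖ := by
      have := (abs_le.mp (by simpa using h0)).2
      simpa using this
    have h2 : w k ≤ ⨆ k, w k :=
      le_ciSup (Set.Finite.bddAbove (Set.finite_range w)) k
    linarith
  set y : Fin n → ℝ := v + γ₀ • η with hy
  have hiter : ∀ N : ℕ, f^[N] y = v + (γ₀ + N) • η := by
    intro N; induction N with
    | zero => simp [hy]
    | succ N ih =>
      rw [Function.iterate_succ_apply', ih,
        hline (γ₀ + N) (le_add_of_nonneg_right (Nat.cast_nonneg N))]
      have : (γ₀ + (N : ℝ)) + 1 = γ₀ + ((N : ℕ) + 1 : ℕ) := by push_cast; ring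
      rw [this]
  have hdist : ∀ N : ℕ, ‖f^[N] x - f^[N] y‖ ≤ ‖x - y‖ := by
    intro N; induction N with
    | zero => exact le_refl _
    | succ N ih =>
      rw [Function.iterate_succ_apply', Function.iterate_succ_apply']
      exact le_trans (hne _ _) ih
  -- sup of c • η
  have hsmul : ∀ c : ℝ, 0 ≤ c → (⨆ k, (c • η) k) = c * S := by
    intro c hc
    simp only [Pi.smul_apply, smul_eq_mul]
    rw [hS, Real.mul_iSup_of_nonneg hc]
  have hsupy : ∀ c : ℝ, 0 ≤ c → |(⨆ k, (v + c • η) k) - c * S| ≤ ‖v‖ := by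
    intro c hc
    rw [abs_le]
    constructor
    · have := supA (c • η) (v + c • η)
      rw [hsmul c hc] at this
      have hnorm : ‖c • η - (v + c • η)‖ = ‖v‖ := by
        have : c • η - (v + c • η) = -v := by abel
        rw [this, norm_neg]
      rw [hnorm] at this
      linarith
    · have := supA (v + c • η) (c • η)
      rw [hsmul c hc] at this
      have hnorm : ‖v + c • η - c • η‖ = ‖v‖ := by
        congr 1; abel
      rw [hnorm] at this
      linarith
  set C : ℝ := ‖x - y‖ + ‖v‖ with hC
  have hbound : ∀ N : ℕ, |(⨆ k, f^[N] x k) - (γ₀ + N) * S| ≤ C := by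
    intro N
    have hcy := hsupy (γ₀ + N) (by positivity)
    rw [← hiter N] at hcy
    have h1 := supA (f^[N] x) (f^[N] y)
    have h2 := supA (f^[N] y) (f^[N] x)
    have h3 : ‖f^[N] y - f^[N] x‖ = ‖f^[N] x - f^[N] y‖ := by
      rw [← norm_neg]; congr 1; abel
    have hd := hdist N
    rw [abs_le] at hcy ⊢
    constructor <;> [nlinarith [hcy.1, hcy.2, h1, h2]; nlinarith [hcy.1, hcy.2, h1, h2]]
  -- squeeze
  have hzero : Filter.Tendsto
      (fun N : ℕ => (⨆ k, f^[N] x k) / (N : ℝ) - S) Filter.atTop (nhds 0) := by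
    refine squeeze_zero_norm' (a := fun N : ℕ => (C + γ₀ * |S|) / (N : ℝ)) ?_ ?_
    · filter_upwards [Filter.eventually_ge_atTop 1] with N hN
      have hNpos : (0 : ℝ) < N := by exact_mod_cast hN
      have heq : (⨆ k, f^[N] x k) / (N : ℝ) - S
          = ((⨆ k, f^[N] x k) - N * S) / N := by
        field_simp
      rw [Real.norm_eq_abs, heq, abs_div, abs_of_pos hNpos]
      gcongr
      have hb := hbound N
      calc |(⨆ k, f^[N] x k) - (N : ℝ) * S|
          = |((⨆ k, f^[N] x k) - (γ₀ + N) * S) + γ₀ * S| := by congr 1; ring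
        _ ≤ |(⨆ k, f^[N] x k) - (γ₀ + N) * S| + |γ₀ * S| := abs_add_le _ _
        _ ≤ C + γ₀ * |S| := by
            rw [abs_mul, abs_of_nonneg hγ₀]; linarith
    · exact tendsto_const_div_atTop_nhds_zero_nat _
  have := hzero.add_const S
  simpa using this
end

section
/- Let f : (ℝ ∪ {-∞})^n → (ℝ ∪ {-∞})^n be order-preserving, additively homogeneous, and continuous (in the topology induced by the metric d(x,y) = |e^x − e^y| on each coordinate). For any x ∈ ℝ^n, if there exists a nontrivial u ∈ (ℝ ∪ {-∞})^n (u not identically -∞) and λ ∈ ℝ with f(u) ≥ λ + u, then lim sup_{N → ∞} max_k f^N_k(x)/N ≥ λ. -/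
/-!
Iterating `f(u) ≥ λ + u` with monotonicity and homogeneity gives `f^N(u) ≥ Nλ + u`.
Since `x` is real and `u < +∞`, some real shift satisfies `c + u ≤ x`, so
`f^N(x) ≥ c + f^N(u)`, and at a coordinate where `u` is finite this grows at least like `Nλ + O(1)`.
-/

open Filter Function

section AdditivelyHomogeneous

variable {ι : Type*} {f : (ι → EReal) → (ι → EReal)}

theorem iterate_const_add_of_const_add
    (hhom : ∀ (c : ℝ) (x : ι → EReal), f (fun i => (c : EReal) + x i) = fun i => c + f x i)
    (N : ℕ) (c : ℝ) (x : ι → EReal) :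
    f^[N] (fun i => (c : EReal) + x i) = fun i => c + f^[N] x i :=
  (show Function.Commute f (fun x i => (c : EReal) + x i) from hhom c).iterate_left N x

theorem mul_add_le_iterate_of_add_le (hmono : Monotone f)
    (hhom : ∀ (c : ℝ) (x : ι → EReal), f (fun i => (c : EReal) + x i) = fun i => c + f x i)
    {u : ι → EReal} {lam : ℝ} (hfu : ∀ k, (lam : EReal) + u k ≤ f u k) (N : ℕ) (k : ι) :
    ((N * lam : ℝ) : EReal) + u k ≤ f^[N] u k := by
  induction N generalizing k with
  | zero => simp
  | succ N ih =>
    calc (((N + 1 : ℕ) * lam : ℝ) : EReal) + u k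
        = (lam : EReal) + (((N * lam : ℝ) : EReal) + u k) := by
          rw [← add_assoc, ← EReal.coe_add]; congr 2; push_cast; ring
      _ ≤ (lam : EReal) + f^[N] u k := by gcongr; exact ih k
      _ = f^[N] (fun i => (lam : EReal) + u i) k := by rw [iterate_const_add_of_const_add hhom]
      _ ≤ f^[N] (f u) k := hmono.iterate N hfu k
      _ = f^[N + 1] u k := by rw [iterate_succ_apply]

end AdditivelyHomogeneous

theorem EReal.exists_const_add_le_coe {ι : Type*} [Finite ι] {u : ι → EReal}
    (hu : ∀ k, u k ≠ ⊤) (x : ι → ℝ) : ∃ c : ℝ, ∀ k, (c : EReal) + u k ≤ x k := by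
  obtain ⟨M, hM⟩ := Finite.exists_le fun k => (u k).toReal - x k
  refine ⟨-M, fun k => ?_⟩
  calc ((-M : ℝ) : EReal) + u k ≤ ((-M : ℝ) : EReal) + (u k).toReal := by
        gcongr; exact EReal.le_coe_toReal (hu k)
    _ ≤ x k := by rw [← EReal.coe_add]; exact EReal.coe_le_coe_iff.2 (by linarith [hM k])

theorem EReal.le_limsup_inv_mul_of_coe_le {s : ℕ → EReal} {lam b : ℝ}
    (hs : ∀ N : ℕ, ((N * lam + b : ℝ) : EReal) ≤ s N) :
    (lam : EReal) ≤ limsup (fun N : ℕ => (((N : ℝ)⁻¹ : ℝ) : EReal) * s N) atTop := by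
  have htend :
      Tendsto (fun N : ℕ => ((lam + b / N : ℝ) : EReal)) atTop (nhds (lam : EReal)) := by
    refine (continuous_coe_real_ereal.tendsto lam).comp ?_
    simpa using tendsto_const_nhds.add (_root_.tendsto_const_div_atTop_nhds_zero_nat b)
  rw [← htend.limsup_eq]
  refine limsup_le_limsup ?_
  filter_upwards [eventually_gt_atTop 0] with N hN
  calc ((lam + b / N : ℝ) : EReal)
        = (((N : ℝ)⁻¹ : ℝ) : EReal) * ((N * lam + b : ℝ) : EReal) := by
          rw [← EReal.coe_mul]; congr 1; field_simp
    _ ≤ (((N : ℝ)⁻¹ : ℝ) : EReal) * s N :=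
          mul_le_mul_of_nonneg_left (hs N) (EReal.coe_nonneg.2 (by positivity))

theorem collatz_wielandt_lower_general (n : ℕ)
    (f : (Fin n → EReal) → (Fin n → EReal))
    (hmono : Monotone f)
    (hhom : ∀ (c : ℝ) (x : Fin n → EReal),
      f (fun i => (c : EReal) + x i) = fun i => (c : EReal) + f x i)
    (x : Fin n → ℝ)
    (u : Fin n → EReal) (hu_bot : ∃ k, u k ≠ ⊥) (hu_top : ∀ k, u k ≠ ⊤)
    (lam : ℝ)
    (hfu : ∀ k, (lam : EReal) + u k ≤ f u k) :
    (lam : EReal) ≤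
      Filter.limsup
        (fun N : ℕ =>
          (((N : ℝ)⁻¹ : ℝ) : EReal) * ⨆ k, f^[N] (fun i => ((x i : ℝ) : EReal)) k)
        Filter.atTop := by
  obtain ⟨k₀, hk₀⟩ := hu_bot
  obtain ⟨a, ha⟩ : ∃ a : ℝ, u k₀ = a :=
    ⟨_, (EReal.coe_toReal (hu_top k₀) hk₀).symm⟩
  obtain ⟨c, hc⟩ := EReal.exists_const_add_le_coe hu_top x
  refine EReal.le_limsup_inv_mul_of_coe_le (b := c + a) fun N => ?_
  calc ((N * lam + (c + a) : ℝ) : EReal)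
      = (c : EReal) + (((N * lam : ℝ) : EReal) + u k₀) := by rw [ha]; norm_cast; ring
    _ ≤ (c : EReal) + f^[N] u k₀ := by
        gcongr; exact mul_add_le_iterate_of_add_le hmono hhom hfu N k₀
    _ = f^[N] (fun i => (c : EReal) + u i) k₀ := by rw [iterate_const_add_of_const_add hhom]
    _ ≤ f^[N] (fun i => ((x i : ℝ) : EReal)) k₀ := hmono.iterate N hc k₀
    _ ≤ ⨆ k, f^[N] (fun i => ((x i : ℝ) : EReal)) k := le_iSup_of_le k₀ le_rfl

/-- Collatz–Wielandt lower bound. For an order-preserving,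
additively homogeneous, continuous self-map `f` of `(ℝ ∪ {-∞})^n` (modelled
inside `EReal`), if there is a nontrivial `u ∈ (ℝ ∪ {-∞})^n` and `λ ∈ ℝ` with
`f(u) ≥ λ + u`, then `limsup_N max_k f^N_k(x)/N ≥ λ` for any real `x`. -/
theorem collatz_wielandt_lower (n : ℕ)
    (f : (Fin n → EReal) → (Fin n → EReal))
    (hmono : Monotone f)
    (hhom : ∀ (c : ℝ) (x : Fin n → EReal),
      f (fun i => (c : EReal) + x i) = fun i => (c : EReal) + f x i)
    (hcont : Continuous f)
    (x : Fin n → ℝ)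
    (u : Fin n → EReal) (hu_bot : ∃ k, u k ≠ ⊥) (hu_top : ∀ k, u k ≠ ⊤)
    (lam : ℝ)
    (hfu : ∀ k, (lam : EReal) + u k ≤ f u k) :
    (lam : EReal) ≤
      Filter.limsup
        (fun N : ℕ =>
          (((N : ℝ)⁻¹ : ℝ) : EReal) * ⨆ k, f^[N] (fun i => ((x i : ℝ) : EReal)) k)
        Filter.atTop :=
  collatz_wielandt_lower_general n f hmono hhom x u hu_bot hu_top lam hfu
end

section
/- Let F : ℝ^n → ℝ^n be order-preserving and additively homogeneous. Suppose that for some ℓ ≥ 1 and ε > 0, F^ℓ(0) ≥ ε·e coordinatewise, where e = (1,…,1). Then the vector v = max(0, F(0), F²(0), …, F^{ℓ−1}(0)) (coordinatewise maximum) satisfies v ≤ F(v). -/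
/-- If `F : ℝ^n → ℝ^n` is order-preserving and additively
homogeneous and `F^ℓ(0) ≥ ε·e` for some `ℓ ≥ 1`, `ε > 0`, then the
coordinatewise maximum `v = max(0, F(0), …, F^{ℓ-1}(0))` satisfies `v ≤ F(v)`. -/
theorem max_of_iterates_subharmonic (n : ℕ)
    (F : (Fin n → ℝ) → (Fin n → ℝ))
    (hmono : Monotone F)
    (hhom : ∀ (c : ℝ) (x : Fin n → ℝ), F (fun i => c + x i) = fun i => c + F x i)
    (ℓ : ℕ) (hℓ : 1 ≤ ℓ) (ε : ℝ) (hε : 0 < ε)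
    (hstep : ∀ k, ε ≤ F^[ℓ] 0 k)
    (v : Fin n → ℝ)
    (hv : ∀ k, v k = (Finset.range ℓ).sup'
      (Finset.nonempty_range_iff.mpr (by omega)) (fun s => F^[s] 0 k)) :
    v ≤ F v := by
  have hle : ∀ s, s < ℓ → F^[s] 0 ≤ v := by
    intro s hs k
    rw [hv k]
    exact Finset.le_sup' (fun t => F^[t] 0 k) (Finset.mem_range.mpr hs)
  intro k
  rw [hv k]
  apply Finset.sup'_le
  intro s hs
  rcases Nat.eq_zero_or_pos s with h0 | hpos
  · subst h0
    simp only [Function.iterate_zero, id]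
    have h1 : F^[ℓ] 0 ≤ F v := by
      have h2 : F^[ℓ] 0 = F (F^[ℓ-1] 0) := by
        conv_lhs => rw [show ℓ = (ℓ-1)+1 by omega]
        rw [Function.iterate_succ_apply']
      rw [h2]
      exact hmono (hle _ (by omega))
    calc (0 : (Fin n → ℝ)) k ≤ ε := by simp [hε.le]
      _ ≤ F^[ℓ] 0 k := hstep k
      _ ≤ F v k := h1 k
  · have h2 : F^[s] 0 = F (F^[s-1] 0) := by
      conv_lhs => rw [show s = (s-1)+1 by omega]
      rw [Function.iterate_succ_apply']
    rw [h2]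
    exact hmono (hle _ (by have := Finset.mem_range.mp hs; omega)) k
end

section
/- Let Q^{(1)}, …, Q^{(n)} be symmetric tropical matrices with entries in the signed tropical numbers, and let S = S(Q^{(1)},…,Q^{(n)}) ⊆ (ℝ ∪ {−∞})^n be the associated tropical spectrahedron (defined by the order-1 and order-2 tropical minor conditions). Then S is the image, under the projection forgetting the auxiliary coordinates, of a tropical Metzler spectrahedron S̃ ⊆ (ℝ ∪ {−∞})^{n + m(m−1)/2}, where S̃ is defined by: for all i, Q⁺_{ii}(x) ≥ Q⁻_{ii}(x); for all i < j, y_{ij} ⊕ Q⁺_{ij}(x) ≥ Q⁻_{ij}(x), y_{ij} ⊕ Q⁻_{ij}(x) ≥ Q⁺_{ij}(x), and Q⁺_{ii}(x) ⊙ Q⁺_{jj}(x) ≥ y_{ij}^{⊙2}. -/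
/-- A signed tropical number: `none` is `-∞`, `some (true, a)` is the tropically
positive number `a`, and `some (false, a)` is the tropically negative number
`⊖a`. -/
abbrev STrop := Option (Bool × ℝ)

/-- The tropical polynomial `Q⁺_{ij}` (terms with tropically positive
coefficients) evaluated at `x ∈ (ℝ ∪ {-∞})^n` (modelled inside `EReal`). -/
noncomputable def tropPos {n m : ℕ} (Q : Fin n → Matrix (Fin m) (Fin m) STrop)
    (x : Fin n → EReal) (i j : Fin m) : EReal :=
  ⨆ k, (match Q k i j with | some (true, a) => (a : EReal) | _ => ⊥) + x k

/-- The tropical polynomial `Q⁻_{ij}` (terms with tropically negative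
coefficients) evaluated at `x`. -/
noncomputable def tropNeg {n m : ℕ} (Q : Fin n → Matrix (Fin m) (Fin m) STrop)
    (x : Fin n → EReal) (i j : Fin m) : EReal :=
  ⨆ k, (match Q k i j with | some (false, a) => (a : EReal) | _ => ⊥) + x k

/-- The tropical spectrahedron `S(Q^{(1)},…,Q^{(n)})` is the image
under the projection forgetting the auxiliary coordinates `y_{ij}` (`i < j`) of
the tropical Metzler spectrahedron `S̃` defined by: for all `i`,
`Q⁺_{ii}(x) ≥ Q⁻_{ii}(x)`; and for all `i < j`, `y_{ij} ⊕ Q⁺_{ij}(x) ≥ Q⁻_{ij}(x)`,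
`y_{ij} ⊕ Q⁻_{ij}(x) ≥ Q⁺_{ij}(x)`, and `Q⁺_{ii}(x) ⊙ Q⁺_{jj}(x) ≥ y_{ij}^{⊙2}`. -/
theorem tropical_spectrahedron_projection_of_metzler (n m : ℕ)
    (Q : Fin n → Matrix (Fin m) (Fin m) STrop)
    (hsymm : ∀ k, (Q k).IsSymm) (x : Fin n → EReal) :
    ((∀ i, tropNeg Q x i i ≤ tropPos Q x i i) ∧
      (∀ i j : Fin m, i < j →
        (max (tropPos Q x i j) (tropNeg Q x i j) + max (tropPos Q x i j) (tropNeg Q x i j)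
            ≤ tropPos Q x i i + tropPos Q x j j) ∨
          tropPos Q x i j = tropNeg Q x i j))
    ↔ ∃ y : {p : Fin m × Fin m // p.1 < p.2} → EReal,
        (∀ i, tropNeg Q x i i ≤ tropPos Q x i i) ∧
        (∀ i j : Fin m, ∀ h : i < j,
          tropNeg Q x i j ≤ max (y ⟨(i, j), h⟩) (tropPos Q x i j)) ∧
        (∀ i j : Fin m, ∀ h : i < j,
          tropPos Q x i j ≤ max (y ⟨(i, j), h⟩) (tropNeg Q x i j)) ∧
        (∀ i j : Fin m, ∀ h : i < j,
          y ⟨(i, j), h⟩ + y ⟨(i, j), h⟩ ≤ tropPos Q x i i + tropPos Q x j j) := by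
  constructor
  · rintro ⟨hd, hod⟩
    refine ⟨fun p => if max (tropPos Q x p.1.1 p.1.2) (tropNeg Q x p.1.1 p.1.2)
        + max (tropPos Q x p.1.1 p.1.2) (tropNeg Q x p.1.1 p.1.2)
        ≤ tropPos Q x p.1.1 p.1.1 + tropPos Q x p.1.2 p.1.2 then
        max (tropPos Q x p.1.1 p.1.2) (tropNeg Q x p.1.1 p.1.2) else ⊥,
      hd, ?_, ?_, ?_⟩
    · intro i j h
      by_cases hc : max (tropPos Q x i j) (tropNeg Q x i j)
          + max (tropPos Q x i j) (tropNeg Q x i j)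
          ≤ tropPos Q x i i + tropPos Q x j j
      · simp only [hc, if_pos]
        exact le_max_of_le_left (le_max_right _ _)
      · simp only [hc, if_neg, not_false_iff]
        rcases hod i j h with h1 | h1
        · exact absurd h1 hc
        · exact le_max_of_le_right h1.symm.le
    · intro i j h
      by_cases hc : max (tropPos Q x i j) (tropNeg Q x i j)
          + max (tropPos Q x i j) (tropNeg Q x i j)
          ≤ tropPos Q x i i + tropPos Q x j j
      · simp only [hc, if_pos]
        exact le_max_of_le_left (le_max_left _ _)
      · simp only [hc, if_neg, not_false_iff]
        rcases hod i j h with h1 | h1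
        · exact absurd h1 hc
        · exact le_max_of_le_right h1.le
    · intro i j h
      by_cases hc : max (tropPos Q x i j) (tropNeg Q x i j)
          + max (tropPos Q x i j) (tropNeg Q x i j)
          ≤ tropPos Q x i i + tropPos Q x j j
      · simpa only [hc, if_pos] using hc
      · simp only [hc, if_neg, not_false_iff]
        rw [EReal.bot_add]
        exact bot_le
  · rintro ⟨y, hd, h1, h2, h3⟩
    refine ⟨hd, fun i j h => ?_⟩
    rcases lt_trichotomy (tropPos Q x i j) (tropNeg Q x i j) with hlt | heq | hlt
    · left
      have hy : tropNeg Q x i j ≤ y ⟨(i, j), h⟩ := by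
        have := h1 i j h
        rcases le_max_iff.mp this with h' | h'
        · exact h'
        · exact absurd h' (not_le.mpr hlt)
      have : max (tropPos Q x i j) (tropNeg Q x i j) ≤ y ⟨(i, j), h⟩ :=
        max_le (le_of_lt hlt |>.trans hy) hy
      exact le_trans (add_le_add this this) (h3 i j h)
    · right; exact heq
    · left
      have hy : tropPos Q x i j ≤ y ⟨(i, j), h⟩ := by
        have := h2 i j h
        rcases le_max_iff.mp this with h' | h'
        · exact h'
        · exact absurd h' (not_le.mpr hlt)
      have : max (tropPos Q x i j) (tropNeg Q x i j) ≤ y ⟨(i, j), h⟩ :=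
        max_le hy ((le_of_lt hlt).trans hy)
      exact le_trans (add_le_add this this) (h3 i j h)
end

section
/- Let F : (ℝ ∪ {−∞})^n → (ℝ ∪ {−∞})^n be an order-preserving, additively homogeneous, continuous map, and suppose that the limit lim_{N→∞} F^N(x)/N (for x ∈ ℝ^n) exists and all its coordinates are equal to a common value λ with λ > 0. Then the set {x ∈ (ℝ ∪ {−∞})^n : x ≤ F(x)} contains a finite vector (a vector in ℝ^n). -/
/-- Let `F` be an order-preserving, additively homogeneous,
continuous self-map of `(ℝ ∪ {-∞})^n` (modelled inside `EReal`) preserving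
`ℝ^n` (via the realization `G`). If for every real `x` all coordinates of
`F^N(x)/N` converge to a common value `λ > 0`, then the set
`{x : x ≤ F(x)}` contains a finite vector. -/
theorem finite_subharmonic_vector_of_positive_mean_payoff (n : ℕ)
    (F : (Fin n → EReal) → (Fin n → EReal))
    (hmono : Monotone F)
    (hhom : ∀ (c : ℝ) (x : Fin n → EReal),
      F (fun i => (c : EReal) + x i) = fun i => (c : EReal) + F x i)
    (hcont : Continuous F)
    (G : (Fin n → ℝ) → (Fin n → ℝ))
    (hG : ∀ x : Fin n → ℝ,
      F (fun i => ((x i : ℝ) : EReal)) = fun i => ((G x i : ℝ) : EReal))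
    (lam : ℝ) (hlam : 0 < lam)
    (hlim : ∀ (x : Fin n → ℝ) (k : Fin n),
      Filter.Tendsto (fun N : ℕ => G^[N] x k / (N : ℝ)) Filter.atTop (nhds lam)) :
    ∃ v : Fin n → ℝ,
      ∀ k, ((v k : ℝ) : EReal) ≤ F (fun i => ((v i : ℝ) : EReal)) k := by
  -- G is monotone
  have hGmono : ∀ x y : Fin n → ℝ, (∀ i, x i ≤ y i) → ∀ i, G x i ≤ G y i := by
    intro x y hxy i
    have h1 : F (fun i => ((x i : ℝ) : EReal)) ≤ F (fun i => ((y i : ℝ) : EReal)) :=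
      hmono (fun i => EReal.coe_le_coe_iff.mpr (hxy i))
    have h2 := h1 i
    rw [hG x, hG y] at h2
    exact EReal.coe_le_coe_iff.mp h2
  -- choose N ≥ 1 with G^[N] 0 ≥ 0 coordinatewise
  obtain ⟨N, hN1, hN⟩ : ∃ N : ℕ, 1 ≤ N ∧ ∀ k, 0 ≤ G^[N] 0 k := by
    have hev : ∀ᶠ N : ℕ in Filter.atTop, ∀ k, lam / 2 ≤ G^[N] 0 k / (N : ℝ) := by
      rw [Filter.eventually_all]
      intro k
      exact (hlim 0 k).eventually (eventually_ge_nhds (by linarith))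
    obtain ⟨N, hN1, hNk⟩ := ((Filter.eventually_ge_atTop 1).and hev).exists
    refine ⟨N, hN1, fun k => ?_⟩
    have hNpos : (0 : ℝ) < (N : ℝ) := by exact_mod_cast hN1
    have h := (le_div_iff₀ hNpos).mp (hNk k)
    nlinarith
  -- define v as the pointwise max of the orbit up to N-1
  have hne : (Finset.range N).Nonempty := ⟨0, Finset.mem_range.mpr hN1⟩
  set v : Fin n → ℝ := fun i => (Finset.range N).sup' hne (fun j => G^[j] 0 i) with hv
  -- key: v ≤ G v
  have hkey : ∀ k, v k ≤ G v k := by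
    intro k
    apply Finset.sup'_le
    intro j hj
    rw [Finset.mem_range] at hj
    -- G^[j] 0 ≤ v pointwise, so G^[j+1] 0 ≤ G v
    have hle : ∀ i, G^[j] 0 i ≤ v i := fun i =>
      Finset.le_sup' (fun j => G^[j] 0 i) (Finset.mem_range.mpr hj)
    have hstep : ∀ i, G^[j+1] 0 i ≤ G v i := by
      intro i
      have := hGmono (G^[j] 0) v hle i
      rwa [← Function.iterate_succ_apply' G j 0] at this
    -- now G^[j] 0 k ≤ G v k, splitting on j
    rcases Nat.eq_zero_or_pos j with rfl | hjpos
    · -- 0 ≤ G v k since 0 ≤ G^[N] 0 k ≤ G v k (take j = N-1)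
      have hleN : ∀ i, G^[N-1] 0 i ≤ v i := fun i =>
        Finset.le_sup' (fun j => G^[j] 0 i)
          (Finset.mem_range.mpr (Nat.sub_lt (by omega) one_pos))
      have h2 : ∀ i, G^[(N-1)+1] 0 i ≤ G v i := by
        intro i
        have := hGmono (G^[N-1] 0) v hleN i
        rwa [← Function.iterate_succ_apply' G (N-1) 0] at this
      have hNN : N - 1 + 1 = N := by omega
      rw [hNN] at h2
      exact le_trans (hN k) (h2 k)
    · obtain ⟨m, rfl⟩ := Nat.exists_eq_add_of_lt hjpos
      simp only [Nat.zero_add] at *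
      -- j = m + 1
      have hlem : ∀ i, G^[m] 0 i ≤ v i := fun i =>
        Finset.le_sup' (fun j => G^[j] 0 i) (Finset.mem_range.mpr (by omega))
      have := hGmono (G^[m] 0) v hlem k
      rwa [← Function.iterate_succ_apply' G m 0] at this
  refine ⟨v, fun k => ?_⟩
  rw [hG v]
  exact EReal.coe_le_coe_iff.mpr (hkey k)
end

section
/- Let P be the transition matrix of a finite Markov chain, and let C be a recurrent class. Then the restriction M_C to C × C of the Cesàro limit M = lim_{N→∞} (1/N) Σ_{s=0}^{N} P^s is a stochastic matrix all of whose rows are equal, and each row is the unique stationary distribution π on C; moreover π_u = 1/θ_u where θ_u is the expected return time to u starting from u. -/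
open Filter Finset

/-- The "taboo" matrix obtained from `P` by killing the transitions into `u`;
`(tabooMatrix P u ^ t * P) u u` is the probability that the first return to `u`
occurs at time `t + 1`. -/
noncomputable def tabooMatrix {s : ℕ} (P : Matrix (Fin s) (Fin s) ℝ) (u : Fin s) :
    Matrix (Fin s) (Fin s) ℝ :=
  Matrix.of fun a b => if b = u then 0 else P a b

/-- The expected first return time `θ_u = E(T_u | X₀ = u) = Σ_{t≥1} t·f_t(u)`. -/
noncomputable def expReturnTime {s : ℕ} (P : Matrix (Fin s) (Fin s) ℝ) (u : Fin s) : ℝ :=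
  ∑' t : ℕ, ((t : ℝ) + 1) * ((tabooMatrix P u ^ t * P) u u)

section Basics
variable {s : ℕ} {P : Matrix (Fin s) (Fin s) ℝ} {C : Finset (Fin s)}

lemma matpow_nonneg {A : Matrix (Fin s) (Fin s) ℝ} (h : ∀ a b, 0 ≤ A a b) (t : ℕ) :
    ∀ a b, 0 ≤ (A ^ t) a b := by
  induction t with
  | zero => intro a b; rw [pow_zero, Matrix.one_apply]; split <;> norm_num
  | succ t ih =>
      intro a b
      rw [pow_succ, Matrix.mul_apply]
      exact Finset.sum_nonneg fun v _ => mul_nonneg (ih a v) (h v b)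

lemma matpow_closed {A : Matrix (Fin s) (Fin s) ℝ}
    (h : ∀ a ∈ C, ∀ b, b ∉ C → A a b = 0) (t : ℕ) :
    ∀ a ∈ C, ∀ b, b ∉ C → (A ^ t) a b = 0 := by
  induction t with
  | zero =>
      intro a ha b hb
      rw [pow_zero, Matrix.one_apply_ne]
      rintro rfl; exact hb ha
  | succ t ih =>
      intro a ha b hb
      rw [pow_succ, Matrix.mul_apply]
      refine Finset.sum_eq_zero fun v _ => ?_
      by_cases hv : v ∈ C
      · rw [h v hv b hb, mul_zero]
      · rw [ih a ha v hv, zero_mul]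

lemma matpow_rowsum (hP1 : ∀ u, ∑ w, P u w = 1) (t : ℕ) (u : Fin s) :
    ∑ w, (P ^ t) u w = 1 := by
  induction t with
  | zero => simp [Matrix.one_apply]
  | succ t ih =>
      simp only [pow_succ, Matrix.mul_apply]
      rw [Finset.sum_comm]
      calc ∑ v, ∑ w, (P ^ t) u v * P v w = ∑ v, (P ^ t) u v * ∑ w, P v w := by
            simp [Finset.mul_sum]
        _ = 1 := by simp only [hP1, mul_one]; exact ih

lemma matpow_le_one (hP0 : ∀ u w, 0 ≤ P u w) (hP1 : ∀ u, ∑ w, P u w = 1) (t : ℕ)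
    (u w : Fin s) : (P ^ t) u w ≤ 1 := by
  rw [← matpow_rowsum hP1 t u]
  exact Finset.single_le_sum (fun v _ => matpow_nonneg hP0 t u v) (Finset.mem_univ w)

lemma rowsum_in_C (hP1 : ∀ u, ∑ w, P u w = 1)
    (hclosed : ∀ u ∈ C, ∀ w, w ∉ C → P u w = 0) {v : Fin s} (hv : v ∈ C) :
    ∑ w ∈ C, P v w = 1 := by
  rw [← hP1 v]
  exact Finset.sum_subset (Finset.subset_univ C) (fun w _ hw => hclosed v hv w hw)

lemma matpow_rowsum_in_C (hP1 : ∀ u, ∑ w, P u w = 1)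
    (hclosed : ∀ u ∈ C, ∀ w, w ∉ C → P u w = 0) (t : ℕ) {v : Fin s} (hv : v ∈ C) :
    ∑ w ∈ C, (P ^ t) v w = 1 := by
  rw [← matpow_rowsum hP1 t v]
  exact Finset.sum_subset (Finset.subset_univ C) (fun w _ hw => matpow_closed hclosed t v hv w hw)

lemma stationary_pow (hclosed : ∀ u ∈ C, ∀ w, w ∉ C → P u w = 0)
    {π : Fin s → ℝ} (hs : ∀ w ∈ C, π w = ∑ v ∈ C, π v * P v w) (t : ℕ) :
    ∀ w ∈ C, π w = ∑ v ∈ C, π v * (P ^ t) v w := by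
  induction t with
  | zero =>
      intro w hw
      rw [Finset.sum_eq_single w (fun v _ hv => by
        rw [pow_zero, Matrix.one_apply_ne hv, mul_zero]) (fun h => absurd hw h)]
      rw [pow_zero, Matrix.one_apply_eq, mul_one]
  | succ t ih =>
      intro w hw
      have : ∀ v ∈ C, π v * (P ^ (t+1)) v w = ∑ x ∈ C, π v * P v x * (P ^ t) x w := by
        intro v hv
        rw [pow_succ', Matrix.mul_apply, Finset.mul_sum]
        rw [← Finset.sum_subset (Finset.subset_univ C)
          (fun x _ hx => by rw [hclosed v hv x hx]; ring)]
        exact Finset.sum_congr rfl fun x _ => by ring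
      rw [Finset.sum_congr rfl this, Finset.sum_comm]
      calc π w = ∑ x ∈ C, π x * (P ^ t) x w := ih w hw
        _ = _ := Finset.sum_congr rfl fun x hx => by
            rw [← Finset.sum_mul, ← hs x hx]
end Basics

section Unique
variable {s : ℕ} {P : Matrix (Fin s) (Fin s) ℝ} {C : Finset (Fin s)}

lemma stationary_pos (hP0 : ∀ u w, 0 ≤ P u w)
    (hclosed : ∀ u ∈ C, ∀ w, w ∉ C → P u w = 0)
    (hirr : ∀ u ∈ C, ∀ w ∈ C, ∃ t : ℕ, 1 ≤ t ∧ 0 < (P ^ t) u w)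
    {τ : Fin s → ℝ} (h0 : ∀ w ∈ C, 0 ≤ τ w)
    (hs : ∀ w ∈ C, τ w = ∑ v ∈ C, τ v * P v w)
    {a : Fin s} (ha : a ∈ C) (hpa : 0 < τ a) : ∀ w ∈ C, 0 < τ w := by
  intro w hw
  obtain ⟨t, -, hpt⟩ := hirr a ha w hw
  have h1 := stationary_pow hclosed hs t w hw
  have h2 : τ a * (P ^ t) a w ≤ ∑ v ∈ C, τ v * (P ^ t) v w :=
    Finset.single_le_sum
      (fun v hv => mul_nonneg (h0 v hv) (matpow_nonneg hP0 t v w)) ha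
  calc (0:ℝ) < τ a * (P ^ t) a w := mul_pos hpa hpt
    _ ≤ _ := h2
    _ = τ w := (h1).symm

lemma stationary_le (hP0 : ∀ u w, 0 ≤ P u w) (hP1 : ∀ u, ∑ w, P u w = 1)
    (hclosed : ∀ u ∈ C, ∀ w, w ∉ C → P u w = 0)
    (hirr : ∀ u ∈ C, ∀ w ∈ C, ∃ t : ℕ, 1 ≤ t ∧ 0 < (P ^ t) u w)
    {π π' : Fin s → ℝ}
    (h1 : ∑ w ∈ C, π w = 1) (hs : ∀ w ∈ C, π w = ∑ v ∈ C, π v * P v w)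
    (h1' : ∑ w ∈ C, π' w = 1) (hs' : ∀ w ∈ C, π' w = ∑ v ∈ C, π' v * P v w) :
    ∀ w ∈ C, π w ≤ π' w := by
  set σ : Fin s → ℝ := fun w => π w - π' w with hσdef
  have hσs : ∀ w ∈ C, σ w = ∑ v ∈ C, σ v * P v w := by
    intro w hw
    simp only [hσdef, sub_mul, Finset.sum_sub_distrib]
    rw [← hs w hw, ← hs' w hw]
  have hσ0 : ∑ w ∈ C, σ w = 0 := by
    simp only [hσdef, Finset.sum_sub_distrib, h1, h1', sub_self]
  -- |σ| is stationary
  have habs_le : ∀ w ∈ C, |σ w| ≤ ∑ v ∈ C, |σ v| * P v w := by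
    intro w hw
    rw [hσs w hw]
    refine (Finset.abs_sum_le_sum_abs _ _).trans (le_of_eq ?_)
    exact Finset.sum_congr rfl fun v hv => abs_mul _ _ |>.trans (by rw [abs_of_nonneg (hP0 v w)])
  have hsum_eq : ∑ w ∈ C, |σ w| = ∑ w ∈ C, ∑ v ∈ C, |σ v| * P v w := by
    rw [Finset.sum_comm]
    refine (Finset.sum_congr rfl fun v hv => ?_).symm
    rw [← Finset.mul_sum, rowsum_in_C hP1 hclosed hv, mul_one]
  have habs : ∀ w ∈ C, |σ w| = ∑ v ∈ C, |σ v| * P v w :=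
    (Finset.sum_eq_sum_iff_of_le habs_le).mp hsum_eq
  -- conclude
  intro w0 hw0
  by_contra hlt
  push_neg at hlt
  have hσw0 : 0 < σ w0 := sub_pos.mpr hlt
  -- there is a point where σ is negative
  have hneg : ∃ w1 ∈ C, σ w1 < 0 := by
    by_contra h
    push_neg at h
    have : 0 < ∑ w ∈ C, σ w :=
      Finset.sum_pos' (fun w hw => h w hw) ⟨w0, hw0, hσw0⟩
    rw [hσ0] at this; exact lt_irrefl 0 this
  obtain ⟨w1, hw1, hσw1⟩ := hneg
  set ρ : Fin s → ℝ := fun w => |σ w| + σ w with hρdef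
  have hρ0 : ∀ w ∈ C, 0 ≤ ρ w := fun w _ => by
    simp only [hρdef]; linarith [neg_abs_le (σ w)]
  have hρs : ∀ w ∈ C, ρ w = ∑ v ∈ C, ρ v * P v w := by
    intro w hw
    simp only [hρdef, add_mul, Finset.sum_add_distrib]
    rw [← habs w hw, ← hσs w hw]
  have hρw0 : 0 < ρ w0 := by
    simp only [hρdef]; linarith [abs_nonneg (σ w0)]
  have := stationary_pos hP0 hclosed hirr hρ0 hρs hw0 hρw0 w1 hw1
  simp only [hρdef] at this
  rw [abs_of_neg hσw1] at this
  linarith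

lemma stationary_unique (hP0 : ∀ u w, 0 ≤ P u w) (hP1 : ∀ u, ∑ w, P u w = 1)
    (hclosed : ∀ u ∈ C, ∀ w, w ∉ C → P u w = 0)
    (hirr : ∀ u ∈ C, ∀ w ∈ C, ∃ t : ℕ, 1 ≤ t ∧ 0 < (P ^ t) u w)
    {π π' : Fin s → ℝ}
    (h1 : ∑ w ∈ C, π w = 1) (hs : ∀ w ∈ C, π w = ∑ v ∈ C, π v * P v w)
    (h1' : ∑ w ∈ C, π' w = 1) (hs' : ∀ w ∈ C, π' w = ∑ v ∈ C, π' v * P v w) :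
    ∀ w ∈ C, π w = π' w := fun w hw =>
  le_antisymm (stationary_le hP0 hP1 hclosed hirr h1 hs h1' hs' w hw)
    (stationary_le hP0 hP1 hclosed hirr h1' hs' h1 hs w hw)
end Unique
section Taboo
variable {s : ℕ} {P : Matrix (Fin s) (Fin s) ℝ} {C : Finset (Fin s)} {u : Fin s}

lemma taboo_nonneg (hP0 : ∀ u w, 0 ≤ P u w) (a b : Fin s) : 0 ≤ tabooMatrix P u a b := by
  unfold tabooMatrix; rw [Matrix.of_apply]; split
  · exact le_refl 0
  · exact hP0 a b

lemma taboo_le (hP0 : ∀ u w, 0 ≤ P u w) (a b : Fin s) : tabooMatrix P u a b ≤ P a b := by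
  unfold tabooMatrix; rw [Matrix.of_apply]; split
  · exact hP0 a b
  · exact le_refl _

lemma taboo_closed (hu : u ∈ C) (hclosed : ∀ a ∈ C, ∀ b, b ∉ C → P a b = 0) :
    ∀ a ∈ C, ∀ b, b ∉ C → tabooMatrix P u a b = 0 := by
  intro a ha b hb
  unfold tabooMatrix; rw [Matrix.of_apply]
  split
  · rfl
  · exact hclosed a ha b hb

lemma taboo_pow_col (t : ℕ) (ht : 1 ≤ t) (a : Fin s) : (tabooMatrix P u ^ t) a u = 0 := by
  obtain ⟨k, rfl⟩ := Nat.exists_eq_add_of_le ht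
  rw [add_comm, pow_succ, Matrix.mul_apply]
  refine Finset.sum_eq_zero fun x _ => ?_
  have : tabooMatrix P u x u = 0 := by unfold tabooMatrix; rw [Matrix.of_apply, if_pos rfl]
  rw [this, mul_zero]

lemma exists_stationary_kac (hP0 : ∀ u w, 0 ≤ P u w) (hP1 : ∀ u, ∑ w, P u w = 1)
    (hCne : C.Nonempty)
    (hclosed : ∀ a ∈ C, ∀ b, b ∉ C → P a b = 0)
    (hirr : ∀ a ∈ C, ∀ b ∈ C, ∃ t : ℕ, 1 ≤ t ∧ 0 < (P ^ t) a b)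
    (hu : u ∈ C) :
    ∃ π : Fin s → ℝ, (∀ w ∈ C, 0 ≤ π w) ∧ (∑ w ∈ C, π w = 1) ∧
      (∀ w ∈ C, π w = ∑ v ∈ C, π v * P v w) ∧ π u = (expReturnTime P u)⁻¹ := by
  classical
  set Q := tabooMatrix P u with hQdef
  have hQ0 : ∀ a b, 0 ≤ Q a b := taboo_nonneg hP0
  have hQle : ∀ a b, Q a b ≤ P a b := taboo_le hP0
  have hQapp : ∀ a b, Q a b = if b = u then 0 else P a b := fun a b => rfl
  have hQclosed : ∀ a ∈ C, ∀ b, b ∉ C → Q a b = 0 := taboo_closed hu hclosed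
  have hQpow0 : ∀ t (a b : Fin s), 0 ≤ (Q ^ t) a b := fun t => matpow_nonneg hQ0 t
  have hQcl : ∀ t, ∀ a ∈ C, ∀ b, b ∉ C → (Q ^ t) a b = 0 :=
    fun t => matpow_closed (taboo_closed hu hclosed) t
  set ρ : ℕ → Fin s → ℝ := fun t v => ∑ w ∈ C, (Q ^ t) v w with hρdef
  have hρ0 : ∀ t v, 0 ≤ ρ t v := fun t v =>
    Finset.sum_nonneg fun w _ => hQpow0 t v w
  have hρzero : ∀ v ∈ C, ρ 0 v = 1 := by
    intro v hv
    simp only [hρdef, pow_zero]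
    rw [Finset.sum_eq_single v (fun w _ hw => Matrix.one_apply_ne (Ne.symm hw))
      (fun h => absurd hv h), Matrix.one_apply_eq]
  have hρrec : ∀ t, ∀ v ∈ C, ρ (t+1) v = ∑ x ∈ C, Q v x * ρ t x := by
    intro t v hv
    simp only [hρdef, pow_succ', Matrix.mul_apply]
    rw [Finset.sum_comm]
    rw [← Finset.sum_subset (Finset.subset_univ C) (fun x _ hx => by
      simp [hQclosed v hv x hx])]
    exact Finset.sum_congr rfl fun x _ => by rw [Finset.mul_sum]
  have hρone : ∀ v ∈ C, ρ 1 v = 1 - P v u := by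
    intro v hv
    simp only [hρdef, pow_one]
    have : ∀ w ∈ C, Q v w = P v w - (if w = u then P v u else 0) := by
      intro w _
      rw [hQapp v w]
      by_cases h : w = u <;> simp [h]
    rw [Finset.sum_congr rfl this, Finset.sum_sub_distrib,
      rowsum_in_C hP1 hclosed hv, Finset.sum_ite_eq' C u (fun _ => P v u), if_pos hu]
  have hρmono : ∀ t, ∀ v ∈ C, ρ (t+1) v ≤ ρ t v := by
    intro t
    induction t with
    | zero => intro v hv; rw [hρone v hv, hρzero v hv]; linarith [hP0 v u]
    | succ t ih =>
        intro v hv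
        rw [hρrec (t+1) v hv, hρrec t v hv]
        exact Finset.sum_le_sum fun x hx =>
          mul_le_mul_of_nonneg_left (ih x hx) (hQ0 v x)
  have hρanti : ∀ v ∈ C, ∀ {m n : ℕ}, m ≤ n → ρ n v ≤ ρ m v := by
    intro v hv m n hmn
    induction n, hmn using Nat.le_induction with
    | base => exact le_refl _
    | succ n hmn ih => exact le_trans (hρmono n v hv) ih
  have hρle1 : ∀ t, ∀ v ∈ C, ρ t v ≤ 1 := fun t v hv =>
    le_trans (hρanti v hv (Nat.zero_le t)) (le_of_eq (hρzero v hv))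
  -- key inequality: ρ t v + (P^t) v u ≤ 1 for t ≥ 1
  have hkey : ∀ t, 1 ≤ t → ∀ v ∈ C, ρ t v + (P ^ t) v u ≤ 1 := by
    intro t ht
    induction t, ht using Nat.le_induction with
    | base => intro v hv; rw [hρone v hv, pow_one]; linarith
    | succ t ht ih =>
        intro v hv
        have hPexp : (P ^ (t+1)) v u = ∑ x ∈ C, P v x * (P ^ t) x u := by
          rw [pow_succ', Matrix.mul_apply]
          exact (Finset.sum_subset (Finset.subset_univ C) (fun x _ hx => by
            rw [hclosed v hv x hx, zero_mul])).symm
        rw [hρrec t v hv, hPexp, ← Finset.sum_add_distrib]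
        calc ∑ x ∈ C, (Q v x * ρ t x + P v x * (P ^ t) x u)
            ≤ ∑ x ∈ C, P v x := by
              refine Finset.sum_le_sum fun x hx => ?_
              by_cases hxu : x = u
              · have hQvx : Q v x = 0 := by rw [hQapp, if_pos hxu]
                rw [hQvx, zero_mul, zero_add]
                calc P v x * (P ^ t) x u ≤ P v x * 1 :=
                      mul_le_mul_of_nonneg_left (matpow_le_one hP0 hP1 t x u) (hP0 v x)
                  _ = P v x := mul_one _
              · have hQx : Q v x = P v x := by rw [hQapp, if_neg hxu]
                rw [hQx, ← mul_add]
                calc P v x * (ρ t x + (P ^ t) x u) ≤ P v x * 1 :=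
                      mul_le_mul_of_nonneg_left (ih x hx) (hP0 v x)
                  _ = P v x := mul_one _
          _ = 1 := rowsum_in_C hP1 hclosed hv
  -- choose uniform time T and gap ε
  set tf : Fin s → ℕ := fun v => if h : v ∈ C then (hirr v h u hu).choose else 1 with htfdef
  have htf1 : ∀ v ∈ C, 1 ≤ tf v := by
    intro v hv
    simp only [htfdef, dif_pos hv]
    exact (hirr v hv u hu).choose_spec.1
  have htfpos : ∀ v ∈ C, 0 < (P ^ tf v) v u := by
    intro v hv
    simp only [htfdef, dif_pos hv]
    exact (hirr v hv u hu).choose_spec.2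
  set T : ℕ := C.sup tf with hTdef
  have hT1 : 1 ≤ T := le_trans (htf1 u hu) (Finset.le_sup hu)
  have hTpos : 0 < T := hT1
  set ε : ℝ := C.inf' hCne (fun v => (P ^ tf v) v u) with hεdef
  have hεpos : 0 < ε := by
    rw [hεdef, Finset.lt_inf'_iff]
    exact fun v hv => htfpos v hv
  have hρT : ∀ v ∈ C, ρ T v ≤ 1 - ε := by
    intro v hv
    have h1 : ρ T v ≤ ρ (tf v) v := hρanti v hv (Finset.le_sup hv)
    have h2 : ρ (tf v) v + (P ^ tf v) v u ≤ 1 := hkey (tf v) (htf1 v hv) v hv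
    have h3 : ε ≤ (P ^ tf v) v u := Finset.inf'_le _ hv
    linarith
  set a : ℝ := 1 - ε with hadef
  have ha0 : 0 ≤ a := le_trans (hρ0 T u) (hρT u hu)
  have ha1 : a < 1 := by rw [hadef]; linarith
  set r : ℕ → ℝ := fun t => ρ t u with hrdef
  have hr0 : ∀ t, 0 ≤ r t := fun t => hρ0 t u
  have hrstep : ∀ t, r (t + T) ≤ a * r t := by
    intro t
    have hexp : r (t + T) = ∑ x ∈ C, (Q ^ t) u x * ρ T x := by
      simp only [hrdef, hρdef, pow_add, Matrix.mul_apply]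
      rw [Finset.sum_comm]
      rw [← Finset.sum_subset (Finset.subset_univ C) (fun x _ hx => by
        simp [hQcl t u hu x hx])]
      exact Finset.sum_congr rfl fun x _ => by rw [Finset.mul_sum]
    rw [hexp]
    calc ∑ x ∈ C, (Q ^ t) u x * ρ T x ≤ ∑ x ∈ C, (Q ^ t) u x * a := by
          refine Finset.sum_le_sum fun x hx => ?_
          exact mul_le_mul_of_nonneg_left (hρT x hx) (hQpow0 t u x)
      _ = a * r t := by rw [← Finset.sum_mul, mul_comm]
  have hrgeo : ∀ k, r (k * T) ≤ a ^ k := by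
    intro k
    induction k with
    | zero => simp only [Nat.zero_mul, pow_zero]; exact le_of_eq (hρzero u hu)
    | succ k ih =>
        have : (k + 1) * T = k * T + T := by ring
        rw [this, pow_succ, mul_comm (a ^ k) a]
        exact le_trans (hrstep (k * T)) (mul_le_mul_of_nonneg_left ih ha0)
  have hranti : ∀ {m n : ℕ}, m ≤ n → r n ≤ r m := fun hmn => hρanti u hu hmn
  have hrle : ∀ t, r t ≤ a ^ (t / T) := fun t =>
    le_trans (hranti (Nat.div_mul_le_self t T)) (hrgeo (t / T))
  -- summability of r
  have hgeo_summable : Summable (fun k : ℕ => a ^ k) := summable_geometric_of_lt_one ha0 ha1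
  have hblock : ∀ m : ℕ, ∑ t ∈ Finset.range (m * T), a ^ (t / T)
      = (T : ℝ) * ∑ k ∈ Finset.range m, a ^ k := by
    intro m
    induction m with
    | zero => simp
    | succ m ih =>
        have hmT : (m + 1) * T = m * T + T := by ring
        rw [hmT, Finset.sum_range_add, ih, Finset.sum_range_succ]
        have : ∀ j ∈ Finset.range T, a ^ ((m * T + j) / T) = a ^ m := by
          intro j hj
          congr 1
          rw [Nat.mul_comm m T, Nat.mul_add_div hTpos]
          simp [Nat.div_eq_of_lt (Finset.mem_range.mp hj)]
        rw [Finset.sum_congr rfl this, Finset.sum_const, Finset.card_range,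
          nsmul_eq_mul]
        ring
  have hbound : ∀ n : ℕ, ∑ t ∈ Finset.range n, a ^ (t / T) ≤ (T : ℝ) * (1 - a)⁻¹ := by
    intro n
    have h1 : n ≤ (n / T + 1) * T := by
      rw [add_mul, one_mul]
      exact le_of_lt (Nat.lt_div_mul_add hTpos)
    calc ∑ t ∈ Finset.range n, a ^ (t / T)
        ≤ ∑ t ∈ Finset.range ((n / T + 1) * T), a ^ (t / T) :=
          Finset.sum_le_sum_of_subset_of_nonneg
            (Finset.range_subset_range.mpr h1) (fun t _ _ => pow_nonneg ha0 _)
      _ = (T : ℝ) * ∑ k ∈ Finset.range (n / T + 1), a ^ k := hblock _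
      _ ≤ (T : ℝ) * (1 - a)⁻¹ := by
          refine mul_le_mul_of_nonneg_left ?_ (Nat.cast_nonneg T)
          rw [← tsum_geometric_of_lt_one ha0 ha1]
          exact Summable.sum_le_tsum _ (fun k _ => pow_nonneg ha0 k) hgeo_summable
  have hrsummable : Summable r :=
    summable_of_sum_range_le hr0 (fun n => le_trans
      (Finset.sum_le_sum fun t _ => hrle t) (hbound n))
  -- first-return probabilities f t = P(T_u = t+1)
  set f : ℕ → ℝ := fun t => (Q ^ t * P) u u with hfdef
  have hQrow : ∀ x ∈ C, ∑ w ∈ C, Q x w = 1 - P x u := by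
    intro x hx
    have h := hρone x hx
    simpa [hρdef, pow_one] using h
  have hrsucc : ∀ t, r (t + 1) = ∑ x ∈ C, (Q ^ t) u x * (1 - P x u) := by
    intro t
    have h1 : r (t + 1) = ∑ x ∈ C, (Q ^ t) u x * ∑ w ∈ C, Q x w := by
      simp only [hrdef, hρdef, pow_succ, Matrix.mul_apply]
      rw [Finset.sum_comm]
      rw [← Finset.sum_subset (Finset.subset_univ C) (fun x _ hx => by
        simp [hQcl t u hu x hx])]
      exact Finset.sum_congr rfl fun x _ => by rw [Finset.mul_sum]
    rw [h1]
    exact Finset.sum_congr rfl fun x hx => by rw [hQrow x hx]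
  have hfeq : ∀ t, f t = ∑ x ∈ C, (Q ^ t) u x * P x u := by
    intro t
    simp only [hfdef, Matrix.mul_apply]
    exact (Finset.sum_subset (Finset.subset_univ C) (fun x _ hx => by
      rw [hQcl t u hu x hx, zero_mul])).symm
  have hf_rr : ∀ t, f t = r t - r (t + 1) := by
    intro t
    have hreq : r t = ∑ x ∈ C, (Q ^ t) u x := rfl
    rw [hfeq t, hrsucc t, hreq, ← Finset.sum_sub_distrib]
    exact Finset.sum_congr rfl fun x _ => by ring
  have hf0 : ∀ t, 0 ≤ f t := fun t =>
    Finset.sum_nonneg (fun x _ => mul_nonneg (hQpow0 t u x) (hP0 x u)) |>.trans_eq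
      (hfeq t).symm
  have hfler : ∀ t, f t ≤ r t := fun t => by
    rw [hf_rr t]; linarith [hr0 (t+1)]
  have hfsummable : Summable f :=
    hrsummable.of_nonneg_of_le hf0 hfler
  have hrtend : Tendsto r atTop (nhds 0) := hrsummable.tendsto_atTop_zero
  have hr00 : r 0 = 1 := hρzero u hu
  have hpartf : ∀ n, ∑ t ∈ Finset.range n, f t = 1 - r n := by
    intro n
    calc ∑ t ∈ Finset.range n, f t = ∑ t ∈ Finset.range n, (r t - r (t+1)) :=
          Finset.sum_congr rfl fun t _ => hf_rr t
      _ = r 0 - r n := Finset.sum_range_sub' r n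
      _ = 1 - r n := by rw [hr00]
  have hfsum : ∑' t, f t = 1 := by
    have h2 : Tendsto (fun n => 1 - r n) atTop (nhds 1) := by
      simpa using tendsto_const_nhds.sub hrtend
    exact tendsto_nhds_unique (hfsummable.hasSum.tendsto_sum_nat.congr hpartf) h2
  -- the expected return time
  set g : ℕ → ℝ := fun t => ((t:ℝ) + 1) * f t with hgdef
  have hθdef : expReturnTime P u = ∑' t, g t := rfl
  have hg0 : ∀ t, 0 ≤ g t := fun t =>
    mul_nonneg (by positivity) (hf0 t)
  have hpartg : ∀ n, ∑ t ∈ Finset.range n, g t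
      = (∑ t ∈ Finset.range n, r t) - n * r n := by
    intro n
    induction n with
    | zero => simp
    | succ n ih =>
        rw [Finset.sum_range_succ, ih, Finset.sum_range_succ]
        simp only [hgdef]
        rw [hf_rr n]
        push_cast
        ring
  have hdiv_tendsto : Tendsto (fun n : ℕ => n / T) atTop atTop := by
    refine tendsto_atTop_atTop.mpr fun b => ⟨b * T, fun n hn => ?_⟩
    have h := Nat.div_le_div_right (c := T) hn
    rwa [Nat.mul_div_cancel b hTpos] at h
  have hh0 : Tendsto (fun k : ℕ => (T:ℝ) * (((k:ℝ) + 1) * a ^ k)) atTop (nhds 0) := by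
    have hs1 : Summable (fun k : ℕ => ((k:ℝ) + 1) * a ^ k) := by
      have h1 := summable_pow_mul_geometric_of_norm_lt_one (R := ℝ) 1
        (r := a) (by rwa [Real.norm_eq_abs, abs_of_nonneg ha0])
      have h2 := summable_geometric_of_lt_one ha0 ha1
      have h3 := h1.add h2
      refine h3.congr fun k => ?_
      push_cast
      ring
    have h4 := hs1.tendsto_atTop_zero.const_mul (T:ℝ)
    simpa using h4
  have hnr : Tendsto (fun n : ℕ => (n:ℝ) * r n) atTop (nhds 0) := by
    have hcomp : Tendsto (fun n : ℕ => (T:ℝ) * (((↑(n / T):ℝ) + 1) * a ^ (n / T)))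
        atTop (nhds 0) := hh0.comp hdiv_tendsto
    refine squeeze_zero (fun n => mul_nonneg (Nat.cast_nonneg n) (hr0 n))
      (fun n => ?_) hcomp
    have hn1 : n ≤ (n / T + 1) * T := by
      rw [add_mul, one_mul]
      exact le_of_lt (Nat.lt_div_mul_add hTpos)
    have hnle : (n:ℝ) ≤ (T:ℝ) * ((↑(n / T):ℝ) + 1) := by
      calc (n:ℝ) ≤ (((n / T + 1) * T : ℕ) : ℝ) := by exact_mod_cast hn1
        _ = (T:ℝ) * ((↑(n / T):ℝ) + 1) := by push_cast; ring
    calc (n:ℝ) * r n ≤ ((T:ℝ) * ((↑(n / T):ℝ) + 1)) * a ^ (n / T) :=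
          mul_le_mul hnle (hrle n) (hr0 n) (by positivity)
      _ = (T:ℝ) * (((↑(n / T):ℝ) + 1) * a ^ (n / T)) := by ring
  have hgbound : ∀ n, ∑ t ∈ Finset.range n, g t ≤ (T:ℝ) * (1 - a)⁻¹ := by
    intro n
    rw [hpartg n]
    have h1 : (0:ℝ) ≤ n * r n := mul_nonneg (Nat.cast_nonneg n) (hr0 n)
    have h2 : ∑ t ∈ Finset.range n, r t ≤ (T:ℝ) * (1 - a)⁻¹ :=
      le_trans (Finset.sum_le_sum fun t _ => hrle t) (hbound n)
    linarith
  have hgsummable : Summable g := summable_of_sum_range_le hg0 hgbound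
  have hθr : ∑' t, g t = ∑' t, r t := by
    have h2 : Tendsto (fun n => (∑ t ∈ Finset.range n, r t) - n * r n)
        atTop (nhds (∑' t, r t)) := by
      simpa using hrsummable.hasSum.tendsto_sum_nat.sub hnr
    exact tendsto_nhds_unique (hgsummable.hasSum.tendsto_sum_nat.congr hpartg) h2
  -- occupation measure ν
  have hQler : ∀ t w, (Q ^ t) u w ≤ r t := by
    intro t w
    by_cases hw : w ∈ C
    · exact Finset.single_le_sum (fun x _ => hQpow0 t u x) hw
    · rw [hQcl t u hu w hw]; exact hr0 t
  have hνsummable : ∀ w, Summable (fun t => (Q ^ t) u w) := fun w =>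
    hrsummable.of_nonneg_of_le (fun t => hQpow0 t u w) (fun t => hQler t w)
  set ν : Fin s → ℝ := fun w => ∑' t, (Q ^ t) u w with hνdef
  have hν0 : ∀ w, 0 ≤ ν w := fun w => tsum_nonneg (fun t => hQpow0 t u w)
  have hνu : ν u = 1 := by
    have h1 : ν u = (Q ^ 0) u u :=
      tsum_eq_single 0 (fun t ht => taboo_pow_col t (Nat.one_le_iff_ne_zero.mpr ht) u)
    rw [h1, pow_zero, Matrix.one_apply_eq]
  have hνsumC : ∑ w ∈ C, ν w = ∑' t, r t := by
    rw [← Summable.tsum_finsetSum (fun w _ => hνsummable w)]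
  have hνstat : ∀ w ∈ C, ν w = ∑ v ∈ C, ν v * P v w := by
    intro w hw
    have hterm : ∑ v ∈ C, ν v * P v w = ∑ v ∈ C, ∑' t, ((Q ^ t) u v * P v w) :=
      Finset.sum_congr rfl fun v _ => (tsum_mul_right).symm
    rw [hterm, ← Summable.tsum_finsetSum (fun v _ => (hνsummable v).mul_right _)]
    have hinner : ∀ t, ∑ v ∈ C, (Q ^ t) u v * P v w = (Q ^ t * P) u w := by
      intro t
      rw [Matrix.mul_apply]
      exact Finset.sum_subset (Finset.subset_univ C) (fun v _ hv => by
        rw [hQcl t u hu v hv, zero_mul])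
    rw [tsum_congr hinner]
    by_cases hwu : w = u
    · subst hwu
      show ν w = ∑' t, f t
      rw [hνu, hfsum]
    · have hQPt : ∀ t, (Q ^ t * P) u w = (Q ^ (t+1)) u w := by
        intro t
        rw [pow_succ, Matrix.mul_apply, Matrix.mul_apply]
        refine Finset.sum_congr rfl fun x _ => ?_
        rw [hQapp x w, if_neg hwu]
      rw [tsum_congr hQPt]
      have h3 := Summable.tsum_eq_zero_add (hνsummable w)
      rw [pow_zero, Matrix.one_apply_ne (fun h => hwu h.symm), zero_add] at h3
      exact h3
  -- the stationary distribution
  have hθeq : expReturnTime P u = ∑' t, r t := by rw [hθdef]; exact hθr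
  have hθ1 : (1:ℝ) ≤ expReturnTime P u := by
    rw [hθdef]
    calc (1:ℝ) = ∑' t, f t := hfsum.symm
      _ ≤ ∑' t, g t := by
          refine Summable.tsum_le_tsum (fun t => ?_) hfsummable hgsummable
          simp only [hgdef]
          have hc : (0:ℝ) ≤ (t:ℝ) := Nat.cast_nonneg t
          exact le_mul_of_one_le_left (hf0 t) (by linarith)
  have hθpos : 0 < expReturnTime P u := lt_of_lt_of_le one_pos hθ1
  refine ⟨fun w => ν w / expReturnTime P u, ?_, ?_, ?_, ?_⟩
  · exact fun w _ => div_nonneg (hν0 w) (le_of_lt hθpos)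
  · rw [← Finset.sum_div, hνsumC, ← hθeq, div_self (ne_of_gt hθpos)]
  · intro w hw
    rw [eq_comm]
    calc ∑ v ∈ C, ν v / expReturnTime P u * P v w
        = (∑ v ∈ C, ν v * P v w) / expReturnTime P u := by
          rw [Finset.sum_div]
          exact Finset.sum_congr rfl fun v _ => by ring
      _ = ν w / expReturnTime P u := by rw [← hνstat w hw]
  · show ν u / expReturnTime P u = (expReturnTime P u)⁻¹
    rw [hνu, one_div]



end Taboo

/-- Let `P` be a stochastic matrix and `C` a recurrent class
(characterized combinatorially: nonempty, closed, and irreducible).  Then the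
restriction to `C × C` of the Cesàro limit `M` of `(1/N) Σ_{t=0}^N P^t` is a
stochastic matrix all of whose rows are equal, and each row is the unique
stationary distribution `π` on `C`; moreover `π_u = 1/θ_u` where `θ_u` is the
expected return time to `u`. -/
theorem cesaro_limit_recurrent_class (s : ℕ) (P : Matrix (Fin s) (Fin s) ℝ)
    (hP0 : ∀ u w, 0 ≤ P u w) (hP1 : ∀ u, ∑ w, P u w = 1)
    (C : Finset (Fin s)) (hCne : C.Nonempty)
    (hclosed : ∀ u ∈ C, ∀ w, w ∉ C → P u w = 0)
    (hirr : ∀ u ∈ C, ∀ w ∈ C, ∃ t : ℕ, 1 ≤ t ∧ 0 < (P ^ t) u w)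
    (M : Matrix (Fin s) (Fin s) ℝ)
    (hM : Tendsto (fun N : ℕ => (N : ℝ)⁻¹ • ∑ t ∈ Finset.range (N + 1), P ^ t)
      atTop (nhds M)) :
    (∀ u ∈ C, ∀ w, 0 ≤ M u w) ∧
    (∀ u ∈ C, ∑ w ∈ C, M u w = 1) ∧
    (∀ u ∈ C, ∀ u' ∈ C, ∀ w ∈ C, M u w = M u' w) ∧
    (∀ u ∈ C, ∀ w ∈ C, M u w = ∑ v ∈ C, M u v * P v w) ∧
    (∀ π : Fin s → ℝ, (∀ w ∈ C, 0 ≤ π w) → (∑ w ∈ C, π w = 1) →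
      (∀ w ∈ C, π w = ∑ v ∈ C, π v * P v w) → ∀ u ∈ C, ∀ w ∈ C, π w = M u w) ∧
    (∀ u ∈ C, M u u = (expReturnTime P u)⁻¹) := by
  classical
  have hinv : Tendsto (fun N : ℕ => (N:ℝ)⁻¹) atTop (nhds 0) :=
    tendsto_inv_atTop_nhds_zero_nat
  -- entrywise convergence of Cesàro averages
  have hMentry : ∀ p q : Fin s, Tendsto
      (fun N : ℕ => (N : ℝ)⁻¹ * ∑ t ∈ Finset.range (N + 1), (P ^ t) p q)
      atTop (nhds (M p q)) := by
    intro p q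
    have h1 : Tendsto
        (fun N : ℕ => ((N : ℝ)⁻¹ • ∑ t ∈ Finset.range (N + 1), P ^ t) p q)
        atTop (nhds (M p q)) := tendsto_pi_nhds.mp (tendsto_pi_nhds.mp hM p) q
    refine h1.congr fun N => ?_
    simp [Matrix.smul_apply, Matrix.sum_apply, smul_eq_mul]
  -- (1) nonnegativity
  have hM0 : ∀ p q, 0 ≤ M p q := by
    intro p q
    refine ge_of_tendsto' (hMentry p q) fun N => ?_
    exact mul_nonneg (by positivity)
      (Finset.sum_nonneg fun t _ => matpow_nonneg hP0 t p q)
  -- M vanishes off C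
  have hMoff : ∀ p ∈ C, ∀ q, q ∉ C → M p q = 0 := by
    intro p hp q hq
    have h1 : ∀ N : ℕ, (N:ℝ)⁻¹ * ∑ t ∈ Finset.range (N+1), (P ^ t) p q = 0 := by
      intro N
      rw [Finset.sum_eq_zero (fun t _ => matpow_closed hclosed t p hp q hq), mul_zero]
    exact tendsto_nhds_unique ((hMentry p q).congr h1) tendsto_const_nhds
  -- (2) row sums on C
  have hrow : ∀ p ∈ C, ∑ q ∈ C, M p q = 1 := by
    intro p hp
    have h1 : Tendsto
        (fun N : ℕ => ∑ q ∈ C, (N:ℝ)⁻¹ * ∑ t ∈ Finset.range (N+1), (P^t) p q)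
        atTop (nhds (∑ q ∈ C, M p q)) :=
      tendsto_finset_sum _ (fun q _ => hMentry p q)
    have h2 : ∀ N : ℕ, ∑ q ∈ C, (N:ℝ)⁻¹ * ∑ t ∈ Finset.range (N+1), (P^t) p q
        = (N:ℝ)⁻¹ * ((N:ℝ) + 1) := by
      intro N
      rw [← Finset.mul_sum, Finset.sum_comm]
      congr 1
      rw [Finset.sum_congr rfl (fun t _ => matpow_rowsum_in_C hP1 hclosed t hp),
        Finset.sum_const, Finset.card_range, nsmul_eq_mul, mul_one]
      push_cast
      ring
    have h3 : Tendsto (fun N : ℕ => (N:ℝ)⁻¹ * ((N:ℝ) + 1)) atTop (nhds 1) := by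
      have h4 : ∀ᶠ N : ℕ in atTop, 1 + (N:ℝ)⁻¹ = (N:ℝ)⁻¹ * ((N:ℝ) + 1) := by
        filter_upwards [eventually_ge_atTop 1] with N hN
        have hN0 : (N:ℝ) ≠ 0 := by
          have : (0:ℝ) < N := by exact_mod_cast hN
          exact this.ne'
        field_simp
      have h5 : Tendsto (fun N : ℕ => 1 + (N:ℝ)⁻¹) atTop (nhds 1) := by
        simpa using tendsto_const_nhds.add hinv
      exact h5.congr' h4
    exact tendsto_nhds_unique (h1.congr h2) h3
  -- invariance: M = M P
  have hMP : ∀ p q, ∑ v, M p v * P v q = M p q := by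
    intro p q
    have h1 : Tendsto
        (fun N : ℕ => ∑ v, ((N:ℝ)⁻¹ * ∑ t ∈ Finset.range (N+1), (P^t) p v) * P v q)
        atTop (nhds (∑ v, M p v * P v q)) :=
      tendsto_finset_sum _ (fun v _ => (hMentry p v).mul_const (P v q))
    have h2 : ∀ N : ℕ, ∑ v, ((N:ℝ)⁻¹ * ∑ t ∈ Finset.range (N+1), (P^t) p v) * P v q
        = ((N:ℝ)⁻¹ * ∑ t ∈ Finset.range (N+1), (P^t) p q)
          + (N:ℝ)⁻¹ * ((P ^ (N+1)) p q - (P ^ 0) p q) := by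
      intro N
      have e1 : ∑ v, ((N:ℝ)⁻¹ * ∑ t ∈ Finset.range (N+1), (P^t) p v) * P v q
          = (N:ℝ)⁻¹ * ∑ t ∈ Finset.range (N+1), (P ^ (t+1)) p q := by
        have e0 : ∀ v : Fin s, ((N:ℝ)⁻¹ * ∑ t ∈ Finset.range (N+1), (P^t) p v) * P v q
            = (N:ℝ)⁻¹ * ∑ t ∈ Finset.range (N+1), (P^t) p v * P v q := by
          intro v
          rw [mul_assoc, Finset.sum_mul]
        rw [Finset.sum_congr rfl (fun v _ => e0 v), ← Finset.mul_sum, Finset.sum_comm]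
        congr 1

      have h5 := Finset.sum_range_succ' (fun t => (P ^ t) p q) (N+1)
      have h6 := Finset.sum_range_succ (fun t => (P ^ t) p q) (N+1)
      rw [e1]
      have e2 : ∑ t ∈ Finset.range (N+1), (P ^ (t+1)) p q
          = ∑ t ∈ Finset.range (N+1), (P^t) p q + ((P ^ (N+1)) p q - (P ^ 0) p q) := by
        linarith
      rw [e2]
      ring
    have h3 : Tendsto
        (fun N : ℕ => ((N:ℝ)⁻¹ * ∑ t ∈ Finset.range (N+1), (P^t) p q)
          + (N:ℝ)⁻¹ * ((P ^ (N+1)) p q - (P ^ 0) p q)) atTop (nhds (M p q + 0)) := by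
      refine (hMentry p q).add ?_
      refine squeeze_zero_norm (fun N => ?_) hinv
      rw [Real.norm_eq_abs, abs_mul, abs_of_nonneg (inv_nonneg.mpr (Nat.cast_nonneg N))]
      have hb : |(P ^ (N+1)) p q - (P ^ 0) p q| ≤ 1 := by
        have h7 := matpow_nonneg hP0 (N+1) p q
        have h8 := matpow_le_one hP0 hP1 (N+1) p q
        have h9 := matpow_nonneg hP0 0 p q
        have h10 := matpow_le_one hP0 hP1 0 p q
        rw [abs_le]
        constructor <;> linarith
      calc (N:ℝ)⁻¹ * |(P ^ (N+1)) p q - (P ^ 0) p q| ≤ (N:ℝ)⁻¹ * 1 :=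
            mul_le_mul_of_nonneg_left hb (inv_nonneg.mpr (Nat.cast_nonneg N))
        _ = (N:ℝ)⁻¹ := mul_one _
    have h4 := tendsto_nhds_unique (h1.congr h2) h3
    rw [add_zero] at h4
    exact h4
  have hMPC : ∀ p ∈ C, ∀ q ∈ C, M p q = ∑ v ∈ C, M p v * P v q := by
    intro p hp q hq
    rw [← hMP p q]
    exact (Finset.sum_subset (Finset.subset_univ C) (fun v _ hv => by
      rw [hMoff p hp v hv, zero_mul])).symm
  have h5 : ∀ π : Fin s → ℝ, (∀ w ∈ C, 0 ≤ π w) → (∑ w ∈ C, π w = 1) →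
      (∀ w ∈ C, π w = ∑ v ∈ C, π v * P v w) → ∀ p ∈ C, ∀ q ∈ C, π q = M p q := by
    intro π hπ0 hπ1 hπs p hp q hq
    exact stationary_unique hP0 hP1 hclosed hirr hπ1 hπs (hrow p hp)
      (fun w hw => hMPC p hp w hw) q hq
  refine ⟨fun p _ q => hM0 p q, hrow, ?_, hMPC, h5, ?_⟩
  · intro p hp p' hp' q hq
    exact (h5 (M p') (fun w _ => hM0 p' w) (hrow p' hp')
      (fun w hw => hMPC p' hp' w hw) p hp q hq).symm
  · intro p hp
    obtain ⟨π, hπ0, hπ1, hπs, hπu⟩ :=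
      exists_stationary_kac hP0 hP1 hCne hclosed hirr hp
    have hpp := h5 π hπ0 hπ1 hπs p hp p hp
    rw [← hpp, hπu]
end

section
/- Let F : ℝ^n → ℝ^n be piecewise affine and nonexpansive in the supremum norm, and suppose F(x) = min_{σ ∈ Σ} F^σ(x) coordinatewise, where Σ is a finite set and each F^σ : ℝ^n → ℝ^n is piecewise affine. If (v, η) is an invariant half-line of F, then there exists σ̄ ∈ Σ such that (v, η) is also an invariant half-line of F^{σ̄}. -/
/-- A polyhedron in `ℝ^n`: an intersection of finitely many half-spaces. -/
def IsPolyhedron {n : ℕ} (S : Set (Fin n → ℝ)) : Prop :=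
  ∃ (k : ℕ) (f : Fin k → ((Fin n → ℝ) →L[ℝ] ℝ)) (c : Fin k → ℝ),
    S = {x | ∀ i, f i x ≤ c i}

/-- A piecewise affine map `ℝ^n → ℝ^n`: finitely many polyhedra covering `ℝ^n`
on each of which the map agrees with an affine map. -/
def IsPiecewiseAffine {n : ℕ} (F : (Fin n → ℝ) → (Fin n → ℝ)) : Prop :=
  ∃ (k : ℕ) (P : Fin k → Set (Fin n → ℝ))
    (g : Fin k → ((Fin n → ℝ) →ᵃ[ℝ] (Fin n → ℝ))),
    (⋃ i, P i) = Set.univ ∧ (∀ i, IsPolyhedron (P i)) ∧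
      ∀ i, ∀ x ∈ P i, F x = g i x

/-- An affine map along a line. -/
lemma affine_on_ray {n : ℕ} (g : (Fin n → ℝ) →ᵃ[ℝ] (Fin n → ℝ)) (v η : Fin n → ℝ) (γ : ℝ) :
    g (v + γ • η) = g v + γ • g.linear η := by
  have : v + γ • η = (γ • η) +ᵥ v := by simp [add_comm]
  rw [this, AffineMap.map_vadd, g.linear.map_smul]
  simp [add_comm]

/-- A piecewise affine map eventually agrees with a single affine map along any ray. -/
lemma ray_eventually_affine {n : ℕ} {G : (Fin n → ℝ) → (Fin n → ℝ)}
    (hG : IsPiecewiseAffine G) (v η : Fin n → ℝ) :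
    ∃ (c : ℝ) (g : (Fin n → ℝ) →ᵃ[ℝ] (Fin n → ℝ)), 0 ≤ c ∧
      ∀ γ : ℝ, c ≤ γ → G (v + γ • η) = g (v + γ • η) := by
  obtain ⟨k, P, g, hcov, hpoly, hagr⟩ := hG
  have hmem : ∀ m : ℕ, ∃ i, v + (m : ℝ) • η ∈ P i := by
    intro m
    have : v + (m : ℝ) • η ∈ ⋃ i, P i := hcov ▸ Set.mem_univ _
    exact Set.mem_iUnion.mp this
  choose h hh using hmem
  obtain ⟨i, hi⟩ := Finite.exists_infinite_fiber h
  have hAinf : (h ⁻¹' {i}).Infinite := Set.infinite_coe_iff.mp hi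
  obtain ⟨K, f, cc, hP⟩ := hpoly i
  have hmemA : ∀ m ∈ h ⁻¹' {i}, ∀ j, f j v + (m : ℝ) * f j η ≤ cc j := by
    intro m hm j
    have : v + (m : ℝ) • η ∈ P i := by
      have := hh m; rw [Set.mem_preimage, Set.mem_singleton_iff] at hm; rw [← hm]; exact this
    rw [hP] at this
    have := this j
    simpa [map_add, map_smul, smul_eq_mul] using this
  have hη : ∀ j, f j η ≤ 0 := by
    intro j
    by_contra hpos
    push_neg at hpos
    obtain ⟨m, hm, hlt⟩ := hAinf.exists_gt ⌈(cc j - f j v) / f j η⌉₊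
    have h1 : (cc j - f j v) / f j η < (m : ℝ) := by
      calc (cc j - f j v) / f j η ≤ (⌈(cc j - f j v) / f j η⌉₊ : ℝ) := Nat.le_ceil _
        _ < m := by exact_mod_cast hlt
    have h2 : cc j - f j v < (m : ℝ) * f j η := by
      rw [div_lt_iff₀ hpos] at h1; linarith
    have := hmemA m hm j
    linarith
  obtain ⟨m₀, hm₀⟩ := hAinf.nonempty
  refine ⟨(m₀ : ℝ), g i, by positivity, ?_⟩
  intro γ hγ
  apply hagr
  rw [hP]
  intro j
  have h1 : f j v + (m₀ : ℝ) * f j η ≤ cc j := hmemA m₀ hm₀ j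
  have h2 : γ * f j η ≤ (m₀ : ℝ) * f j η := mul_le_mul_of_nonpos_right hγ (hη j)
  have : f j (v + γ • η) = f j v + γ * f j η := by simp [map_add, map_smul, smul_eq_mul]
  rw [this]; linarith

/-- If `F = min_σ F^σ` (coordinatewise, with the minimum attained
at each point) is piecewise affine and sup-norm nonexpansive, each `F^σ` is
piecewise affine, and `(v, η)` is an invariant half-line of `F`, then `(v, η)`
is also an invariant half-line of `F^σ̄` for some `σ̄`. -/
theorem invariant_halfline_selection (n : ℕ) (S : Type) [Fintype S] [Nonempty S]
    (F : (Fin n → ℝ) → (Fin n → ℝ)) (Fs : S → (Fin n → ℝ) → (Fin n → ℝ))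
    (hFpw : IsPiecewiseAffine F) (hpw : ∀ σ : S, IsPiecewiseAffine (Fs σ))
    (hne : ∀ x y : Fin n → ℝ, ‖F x - F y‖ ≤ ‖x - y‖)
    (hle : ∀ (x : Fin n → ℝ) (σ : S), F x ≤ Fs σ x)
    (hsel : ∀ x : Fin n → ℝ, ∃ σ : S, F x = Fs σ x)
    (v η : Fin n → ℝ) (γ₀ : ℝ) (hγ₀ : 0 ≤ γ₀)
    (hinv : ∀ γ : ℝ, γ₀ ≤ γ → F (v + γ • η) = v + (γ + 1) • η) :
    ∃ σ : S, ∃ γ₁ : ℝ, 0 ≤ γ₁ ∧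
      ∀ γ : ℝ, γ₁ ≤ γ → Fs σ (v + γ • η) = v + (γ + 1) • η := by
  -- each Fs σ eventually agrees with an affine map along the ray
  have key : ∀ σ : S, ∃ (c : ℝ) (g : (Fin n → ℝ) →ᵃ[ℝ] (Fin n → ℝ)), 0 ≤ c ∧
      ∀ γ : ℝ, c ≤ γ → Fs σ (v + γ • η) = g (v + γ • η) :=
    fun σ => ray_eventually_affine (hpw σ) v η
  choose c a hc ha using key
  -- a uniform threshold
  set C : ℝ := γ₀ ⊔ (Finset.univ.sup' Finset.univ_nonempty c) with hC
  have hCγ₀ : γ₀ ≤ C := le_sup_left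
  have hC0 : 0 ≤ C := hγ₀.trans hCγ₀
  have hCc : ∀ σ, c σ ≤ C := fun σ =>
    (Finset.le_sup' c (Finset.mem_univ σ)).trans le_sup_right
  -- pigeonhole: some σ is selected at two distinct points of the ray
  choose hσ hhσ using fun m : ℕ => hsel (v + (C + (m : ℝ)) • η)
  obtain ⟨m₁, m₂, hm12, hmeq⟩ := Finite.exists_ne_map_eq_of_infinite hσ
  set σ := hσ m₁ with hσdef
  set γa := C + (m₁ : ℝ)
  set γb := C + (m₂ : ℝ)
  have hγab : γa ≠ γb := fun h => hm12 (Nat.cast_injective (add_left_cancel h))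
  have heq : ∀ γ : ℝ, C ≤ γ → (F (v + γ • η) = Fs σ (v + γ • η)) →
      a σ (v + γ • η) = v + (γ + 1) • η := by
    intro γ hγ hFγ
    rw [← ha σ γ ((hCc σ).trans hγ), ← hFγ]
    exact hinv γ (hCγ₀.trans hγ)
  have hCa : C ≤ γa := le_add_of_nonneg_right (Nat.cast_nonneg _)
  have hCb : C ≤ γb := le_add_of_nonneg_right (Nat.cast_nonneg _)
  have e1 : a σ (v + γa • η) = v + (γa + 1) • η := heq γa hCa (hhσ m₁)
  have hF2 : F (v + γb • η) = Fs σ (v + γb • η) := by rw [hmeq]; exact hhσ m₂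
  have e2 : a σ (v + γb • η) = v + (γb + 1) • η := heq γb hCb hF2
  rw [affine_on_ray] at e1 e2
  -- deduce the affine map's direction and base point
  have hw : (a σ).linear η = η := by
    have hsub : (γa - γb) • (a σ).linear η = (γa - γb) • η := by
      calc (γa - γb) • (a σ).linear η
          = (a σ v + γa • (a σ).linear η) - (a σ v + γb • (a σ).linear η) := by module
        _ = (v + (γa + 1) • η) - (v + (γb + 1) • η) := by rw [e1, e2]
        _ = (γa - γb) • η := by module
    exact smul_right_injective _ (sub_ne_zero.mpr hγab) hsub
  have hbase : a σ v = v + η := by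
    rw [hw] at e1
    have h : a σ v + γa • η = v + η + γa • η := by rw [e1]; module
    exact add_right_cancel h
  refine ⟨σ, C, hC0, fun γ hγ => ?_⟩
  rw [ha σ γ ((hCc σ).trans hγ), affine_on_ray, hw, hbase]
  module
end

section
/- Let Q^{(1)}, …, Q^{(n)} be symmetric tropical Metzler matrices of size m (with m ≥ 1), over the signed tropical numbers, and suppose all diagonal entries Q^{(k)}_{ii} are tropically positive reals and all off-diagonal entries are tropically negative reals (i.e., all entries finite). Consider real symmetric matrices 𝐐^{(k)}(t) with entries 𝐐^{(k)}_{ij}(t) = sign(Q^{(k)}_{ij}) · t^{|Q^{(k)}_{ij}|}. Suppose there exist x ∈ ℝ^n and λ > 0 such that for all i, j ∈ [m]: 2λ + max over k with Q^{(k)}_{ij} tropically negative of (|Q^{(k)}_{ij}| + x_k) ≤ (1/2)·max over l of (Q^{(l)}_{ii} + x_l with Q^{(l)}_{ii} positive) + (1/2)·max over l of (Q^{(l)}_{jj} + x_l with Q^{(l)}_{jj} positive). Then for every t > (2(m−1)n)^{1/(2λ)} with t > 1, the point 𝐱 = (t^{x_1}, …, t^{x_n}) satisfies 𝐐_{ii}(t)(𝐱)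 · 𝐐_{jj}(t)(𝐱) ≥ (m−1)²·(𝐐_{ij}(t)(𝐱))² and 𝐐_{ii}(t)(𝐱) ≥ 0 for all i < j, where 𝐐(t)(𝐱) = Σ_k 𝐱_k 𝐐^{(k)}(t); consequently Σ_k 𝐱_k 𝐐^{(k)}(t) is positive semidefinite. -/
/-- The real symmetric matrix `Σ_k t^{x_k} 𝐐^{(k)}(t)` where
`𝐐^{(k)}_{ii}(t) = t^{d k i}` and `𝐐^{(k)}_{ij}(t) = -t^{o k i j}` for `i ≠ j`. -/
noncomputable def archMatrix (n m : ℕ) (d : Fin n → Fin m → ℝ)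
    (o : Fin n → Fin m → Fin m → ℝ) (x : Fin n → ℝ) (t : ℝ) :
    Matrix (Fin m) (Fin m) ℝ :=
  Matrix.of fun i j =>
    ∑ k, Real.rpow t (x k) *
      (if i = j then Real.rpow t (d k i) else -Real.rpow t (o k i j))

/-!
For large `t` every entry of the lifted matrix `A` is governed by its leading monomial:
`A i i ≥ t ^ Dᵢ` and `|A i j| ≤ n t ^ Sᵢⱼ`, where `Dᵢ`, `Sᵢⱼ` are the tropical entries evaluated
at `x`. Once `t ^ (2λ) > 2(m-1)n`, the feasibility gap `2λ` absorbs the constant `(m-1)n`, so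
`(m-1)|A i j| ≤ t ^ ((Dᵢ + Dⱼ)/2) ≤ √(A i i A j j)`. Any real symmetric matrix with nonnegative
diagonal and this property is positive semidefinite: by AM-GM,
`2(m-1)|A i j vᵢ vⱼ| ≤ A i i vᵢ² + A j j vⱼ²`, and summing over the ordered pairs `i ≠ j` bounds
`(m-1)` times the off-diagonal part of `vᵀAv` by `(m-1)` times its diagonal part.
-/

open Finset Matrix

theorem two_mul_abs_mul_mul_le {a b c p q : ℝ} (ha : 0 ≤ a) (hb : 0 ≤ b) (h : c ^ 2 ≤ a * b) :
    2 * |c * p * q| ≤ a * p ^ 2 + b * q ^ 2 := by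
  have hsum : 0 ≤ a * p ^ 2 + b * q ^ 2 := by positivity
  rw [← abs_two, ← abs_mul, ← abs_of_nonneg hsum]
  refine sq_le_sq.mp ?_
  nlinarith [mul_le_mul_of_nonneg_right h (by positivity : 0 ≤ 4 * p ^ 2 * q ^ 2),
    sq_nonneg (a * p ^ 2 - b * q ^ 2)]

theorem Finset.sum_sum_erase_add {ι R : Type*} [Fintype ι] [DecidableEq ι] [CommRing R]
    (f : ι → R) :
    ∑ i, ∑ j ∈ univ.erase i, (f i + f j) = 2 * ((Fintype.card ι : R) - 1) * ∑ i, f i := by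
  simp only [sum_add_distrib, sum_erase_eq_sub (mem_univ _), sum_const, card_univ, nsmul_eq_mul,
    sum_sub_distrib, ← mul_sum]
  ring

theorem Matrix.dotProduct_mulVec_eq_diag_add_offDiag {ι R : Type*} [Fintype ι] [DecidableEq ι]
    [CommRing R] (A : Matrix ι ι R) (v : ι → R) :
    v ⬝ᵥ A *ᵥ v = ∑ i, A i i * v i ^ 2 + ∑ i, ∑ j ∈ univ.erase i, v i * (A i j * v j) := by
  simp only [dotProduct, mulVec, mul_sum, ← sum_add_distrib]
  refine sum_congr rfl fun i _ => ?_
  rw [← add_sum_erase _ _ (mem_univ i)]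
  ring

theorem Matrix.posSemidef_of_sq_mul_sq_le {ι : Type*} [Fintype ι]
    {A : Matrix ι ι ℝ} (hA : A.IsHermitian) (hdiag : ∀ i, 0 ≤ A i i)
    (hoff : ∀ i j, i ≠ j → ((Fintype.card ι : ℝ) - 1) ^ 2 * A i j ^ 2 ≤ A i i * A j j) :
    A.PosSemidef := by
  classical
  refine .of_dotProduct_mulVec_nonneg hA fun v => ?_
  rw [star_trivial, dotProduct_mulVec_eq_diag_add_offDiag]
  set c : ℝ := Fintype.card ι - 1
  set D := ∑ i, A i i * v i ^ 2
  set O := ∑ i, ∑ j ∈ univ.erase i, v i * (A i j * v j)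
  have hD : 0 ≤ D := sum_nonneg fun i _ => mul_nonneg (hdiag i) (sq_nonneg _)
  rcases le_or_gt (Fintype.card ι) 1 with hcard | hcard
  · have hO : O = 0 := sum_eq_zero fun i _ => sum_eq_zero fun j hj =>
      absurd (Fintype.card_le_one_iff.mp hcard j i) (ne_of_mem_erase hj)
    rw [hO, add_zero]
    exact hD
  · have hc : 0 < c := by simp only [c, sub_pos, Nat.one_lt_cast, hcard]
    have hpair : ∀ i j, i ≠ j →
        -(2 * c * (v i * (A i j * v j))) ≤ A i i * v i ^ 2 + A j j * v j ^ 2 := by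
      intro i j hij
      have := two_mul_abs_mul_mul_le (hdiag i) (hdiag j) (c := c * A i j) (p := v i) (q := v j)
        (by rw [mul_pow]; exact hoff i j hij)
      have := neg_abs_le (c * A i j * v i * v j)
      linarith
    have hcO : -(2 * c * O) ≤ 2 * c * D := calc
      -(2 * c * O) = ∑ i, ∑ j ∈ univ.erase i, -(2 * c * (v i * (A i j * v j))) := by
        simp only [O, mul_sum, sum_neg_distrib]
      _ ≤ ∑ i, ∑ j ∈ univ.erase i, (A i i * v i ^ 2 + A j j * v j ^ 2) :=
        sum_le_sum fun i _ => sum_le_sum fun j hj => hpair i j (ne_of_mem_erase hj).symm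
      _ = 2 * c * D := sum_sum_erase_add fun i => A i i * v i ^ 2
    nlinarith

theorem Real.rpow_ciSup_le_sum_rpow {ι : Type*} [Fintype ι] [Nonempty ι] {t : ℝ} (ht : 0 ≤ t)
    (f : ι → ℝ) : t ^ (⨆ k, f k) ≤ ∑ k, t ^ f k := by
  obtain ⟨k, hk⟩ := exists_eq_ciSup_of_finite (f := f)
  rw [← hk]
  exact single_le_sum (fun k _ => rpow_nonneg ht (f k)) (mem_univ k)

theorem Real.sum_rpow_le_card_mul_rpow_ciSup {ι : Type*} [Fintype ι] {t : ℝ} (ht : 1 ≤ t)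
    (f : ι → ℝ) : ∑ k, t ^ f k ≤ Fintype.card ι * t ^ (⨆ k, f k) := by
  rw [← nsmul_eq_mul, ← card_univ, ← sum_const]
  exact sum_le_sum fun k _ =>
    rpow_le_rpow_of_exponent_le ht (le_ciSup (Set.finite_range f).bddAbove k)

namespace archMatrix

variable {n m : ℕ} {d : Fin n → Fin m → ℝ} {o : Fin n → Fin m → Fin m → ℝ} {x : Fin n → ℝ}
  {t : ℝ}

theorem apply_self (ht : 0 < t) (i : Fin m) :
    archMatrix n m d o x t i i = ∑ k, t ^ (d k i + x k) := by
  simp only [archMatrix, Matrix.of_apply, ↓reduceIte, Real.rpow_eq_pow, Real.rpow_add ht]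
  exact sum_congr rfl fun k _ => mul_comm _ _

theorem apply_of_ne (ht : 0 < t) {i j : Fin m} (hij : i ≠ j) :
    archMatrix n m d o x t i j = -∑ k, t ^ (o k i j + x k) := by
  simp only [archMatrix, Matrix.of_apply, if_neg hij, Real.rpow_eq_pow, Real.rpow_add ht,
    mul_neg, sum_neg_distrib]
  exact congrArg _ (sum_congr rfl fun k _ => mul_comm _ _)

theorem apply_self_nonneg (ht : 0 ≤ t) (i : Fin m) : 0 ≤ archMatrix n m d o x t i i := by
  simp only [archMatrix, Matrix.of_apply, ↓reduceIte]
  exact sum_nonneg fun k _ => mul_nonneg (Real.rpow_nonneg ht _) (Real.rpow_nonneg ht _)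

theorem isHermitian (hosymm : ∀ k i j, o k i j = o k j i) :
    (archMatrix n m d o x t).IsHermitian :=
  Matrix.IsHermitian.ext fun i j => by
    rcases eq_or_ne i j with rfl | hij
    · rfl
    · simp only [archMatrix, Matrix.of_apply, star_trivial, if_neg hij, if_neg hij.symm,
        hosymm _ j i]

theorem rpow_ciSup_le_apply_self (hn : 0 < n) (ht : 0 < t) (i : Fin m) :
    t ^ (⨆ k, d k i + x k) ≤ archMatrix n m d o x t i i :=
  have : Nonempty (Fin n) := ⟨⟨0, hn⟩⟩
  apply_self ht i ▸ Real.rpow_ciSup_le_sum_rpow ht.le _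

theorem abs_apply_le (ht : 1 ≤ t) {i j : Fin m} (hij : i ≠ j) :
    |archMatrix n m d o x t i j| ≤ n * t ^ (⨆ k, o k i j + x k) := by
  have ht0 : 0 < t := one_pos.trans_le ht
  rw [apply_of_ne ht0 hij, abs_neg,
    abs_of_nonneg (sum_nonneg fun k _ => Real.rpow_nonneg ht0.le _)]
  simpa using Real.sum_rpow_le_card_mul_rpow_ciSup ht fun k => o k i j + x k

theorem sq_mul_sq_apply_le_of_feasible (hn : 0 < n) {lam : ℝ} (hlam : 0 < lam) (ht1 : 1 < t)
    (ht : (2 * ((m : ℝ) - 1) * n) ^ (1 / (2 * lam)) < t) {i j : Fin m} (hij : i ≠ j)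
    (hineq : 2 * lam + (⨆ k, o k i j + x k) ≤
      (1 / 2) * (⨆ k, d k i + x k) + (1 / 2) * (⨆ k, d k j + x k)) :
    ((m : ℝ) - 1) ^ 2 * archMatrix n m d o x t i j ^ 2 ≤
      archMatrix n m d o x t i i * archMatrix n m d o x t j j := by
  have ht0 : 0 < t := one_pos.trans ht1
  set A := archMatrix n m d o x t
  set S := ⨆ k, o k i j + x k
  set Di := ⨆ k, d k i + x k
  set Dj := ⨆ k, d k j + x k
  have hm1 : (0 : ℝ) ≤ (m : ℝ) - 1 := sub_nonneg.mpr (Nat.one_le_cast.mpr i.pos)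
  have hscale : ((m : ℝ) - 1) * n ≤ t ^ (2 * lam) := by
    rw [one_div] at ht
    have := (Real.rpow_inv_lt_iff_of_pos (by positivity) ht0.le (by positivity)).mp ht
    nlinarith [mul_nonneg hm1 n.cast_nonneg]
  have hoff : ((m : ℝ) - 1) * |A i j| ≤ t ^ ((Di + Dj) / 2) := calc
    ((m : ℝ) - 1) * |A i j| ≤ ((m : ℝ) - 1) * n * t ^ S := by
      rw [mul_assoc]; exact mul_le_mul_of_nonneg_left (abs_apply_le ht1.le hij) hm1
    _ ≤ t ^ (2 * lam) * t ^ S := by gcongr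
    _ = t ^ (2 * lam + S) := (Real.rpow_add ht0 _ _).symm
    _ ≤ t ^ ((Di + Dj) / 2) := Real.rpow_le_rpow_of_exponent_le ht1.le (by linarith)
  calc ((m : ℝ) - 1) ^ 2 * A i j ^ 2 = (((m : ℝ) - 1) * |A i j|) ^ 2 := by rw [mul_pow, sq_abs]
    _ ≤ (t ^ ((Di + Dj) / 2)) ^ 2 := by gcongr
    _ = t ^ Di * t ^ Dj := by
      rw [← Real.rpow_add ht0, ← Real.rpow_mul_natCast ht0.le]
      ring_nf
    _ ≤ A i i * A j j := mul_le_mul (rpow_ciSup_le_apply_self hn ht0 i)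
      (rpow_ciSup_le_apply_self hn ht0 j) (by positivity) (apply_self_nonneg ht0.le i)

end archMatrix

theorem nonarchimedean_feasibility_implies_archimedean_general (n m : ℕ)
    (hn : 0 < n)
    (d : Fin n → Fin m → ℝ) (o : Fin n → Fin m → Fin m → ℝ)
    (hosymm : ∀ k i j, o k i j = o k j i)
    (x : Fin n → ℝ) (lam : ℝ) (hlam : 0 < lam)
    (hineq : ∀ i j : Fin m, i ≠ j →
      2 * lam + (⨆ k, o k i j + x k) ≤
        (1 / 2) * (⨆ k, d k i + x k) + (1 / 2) * (⨆ k, d k j + x k))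
    (t : ℝ) (ht1 : 1 < t)
    (ht : Real.rpow (2 * ((m : ℝ) - 1) * (n : ℝ)) (1 / (2 * lam)) < t) :
    (∀ i, 0 ≤ archMatrix n m d o x t i i) ∧
    (∀ i j : Fin m, i ≠ j →
      ((m : ℝ) - 1) ^ 2 * (archMatrix n m d o x t i j) ^ 2 ≤
        archMatrix n m d o x t i i * archMatrix n m d o x t j j) ∧
    (archMatrix n m d o x t).PosSemidef := by
  have hdiag : ∀ i, 0 ≤ archMatrix n m d o x t i i :=
    archMatrix.apply_self_nonneg (zero_le_one.trans ht1.le)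
  have hoff : ∀ i j : Fin m, i ≠ j → ((m : ℝ) - 1) ^ 2 * (archMatrix n m d o x t i j) ^ 2 ≤
      archMatrix n m d o x t i i * archMatrix n m d o x t j j := fun i j hij =>
    archMatrix.sq_mul_sq_apply_le_of_feasible hn hlam ht1 ht hij (hineq i j hij)
  refine ⟨hdiag, hoff, Matrix.posSemidef_of_sq_mul_sq_le (archMatrix.isHermitian hosymm) hdiag ?_⟩
  simpa only [Fintype.card_fin] using hoff

/-- For tropical Metzler matrices with tropically positive real
diagonal entries `d k i` and tropically negative real off-diagonal entries
`⊖ (o k i j)`, monomially lifted to `𝐐^{(k)}(t)`, if `x ∈ ℝ^n` and `λ > 0`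
satisfy the strict tropical feasibility inequalities, then for every
`t > (2(m-1)n)^{1/(2λ)}` with `t > 1`, the point `𝐱 = (t^{x_1},…,t^{x_n})`
satisfies the order-1 and weighted order-2 minor inequalities for
`A = Σ_k 𝐱_k 𝐐^{(k)}(t)`, and consequently `A` is positive semidefinite. -/
theorem nonarchimedean_feasibility_implies_archimedean (n m : ℕ)
    (hn : 0 < n) (hm : 1 ≤ m)
    (d : Fin n → Fin m → ℝ) (o : Fin n → Fin m → Fin m → ℝ)
    (hosymm : ∀ k i j, o k i j = o k j i)
    (x : Fin n → ℝ) (lam : ℝ) (hlam : 0 < lam)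
    (hineq : ∀ i j : Fin m, i ≠ j →
      2 * lam + (⨆ k, o k i j + x k) ≤
        (1 / 2) * (⨆ k, d k i + x k) + (1 / 2) * (⨆ k, d k j + x k))
    (t : ℝ) (ht1 : 1 < t)
    (ht : Real.rpow (2 * ((m : ℝ) - 1) * (n : ℝ)) (1 / (2 * lam)) < t) :
    (∀ i, 0 ≤ archMatrix n m d o x t i i) ∧
    (∀ i j : Fin m, i ≠ j →
      ((m : ℝ) - 1) ^ 2 * (archMatrix n m d o x t i j) ^ 2 ≤
        archMatrix n m d o x t i i * archMatrix n m d o x t j j) ∧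
    (archMatrix n m d o x t).PosSemidef :=
  nonarchimedean_feasibility_implies_archimedean_general n m hn d o hosymm x lam hlam hineq t ht1 ht
end

section
/- Let A be a real symmetric m × m matrix (m ≥ 2) with nonnegative diagonal entries such that A_{ii}·A_{jj} ≥ (m−1)²·A_{ij}² for all i ≠ j. Then A is positive semidefinite. -/
/-!
With `c = m - 1`, `aᵢ = Aᵢᵢ xᵢ²` and `fᵢⱼ = xᵢ Aᵢⱼ xⱼ`, the hypothesis gives `(c fᵢⱼ)² ≤ aᵢ aⱼ`,
hence `aᵢ + aⱼ + 2c fᵢⱼ ≥ 0` by AM–GM. Summing these terms over all pairs `(i, j)` gives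
`2m ∑ aᵢ + 2c xᵀAx`, while the diagonal pairs alone already contribute `2m ∑ aᵢ`;
so `c xᵀAx ≥ 0`.
-/

open Finset Matrix

theorem neg_add_le_two_mul_of_sq_le_mul {R : Type*} [Field R] [LinearOrder R]
    [IsStrictOrderedRing R] {a b t : R} (ha : 0 ≤ a) (hb : 0 ≤ b) (ht : t ^ 2 ≤ a * b) :
    -(a + b) ≤ 2 * t := by
  nlinarith [sq_nonneg (a - b), sq_nonneg (a + b + 2 * t)]

theorem Matrix.dotProduct_mulVec_eq_sum_sum {n R : Type*} [Fintype n] [CommSemiring R]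
    (A : Matrix n n R) (x y : n → R) : x ⬝ᵥ A *ᵥ y = ∑ i, ∑ j, x i * A i j * y j := by
  simp only [dotProduct, mulVec, mul_sum, mul_assoc]

theorem Matrix.posSemidef_of_card_sub_one_sq_mul_sq_le {n : Type*} [Fintype n]
    (hn : 1 < Fintype.card n) {A : Matrix n n ℝ} (hA : A.IsSymm) (hdiag : ∀ i, 0 ≤ A i i)
    (h : ∀ i j, i ≠ j → ((Fintype.card n : ℝ) - 1) ^ 2 * A i j ^ 2 ≤ A i i * A j j) :
    A.PosSemidef := by
  refine PosSemidef.of_dotProduct_mulVec_nonneg (isHermitian_iff_isSymm.mpr hA) fun x => ?_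
  rw [star_trivial, dotProduct_mulVec_eq_sum_sum]
  set c : ℝ := (Fintype.card n : ℝ) - 1
  have hc : 0 < c := by
    simp only [c, sub_pos, Nat.one_lt_cast, hn]
  set a : n → ℝ := fun i => A i i * x i ^ 2
  set f : n → n → ℝ := fun i j => x i * A i j * x j
  set g : n → n → ℝ := fun i j => a i + a j + 2 * c * f i j
  have hg : ∀ i j, 0 ≤ g i j := by
    intro i j
    rcases eq_or_ne i j with rfl | hij
    · simp only [g, a, f]
      nlinarith [mul_nonneg (hdiag i) (sq_nonneg (x i))]
    · have := neg_add_le_two_mul_of_sq_le_mul (mul_nonneg (hdiag i) (sq_nonneg (x i)))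
        (mul_nonneg (hdiag j) (sq_nonneg (x j))) (t := c * f i j) (by
          simp only [f, mul_pow]
          nlinarith [mul_le_mul_of_nonneg_right (h i j hij) (sq_nonneg (x i * x j))])
      simp only [g]
      linarith
  have hsum : ∑ i, ∑ j, g i j = 2 * (c + 1) * ∑ i, a i + 2 * c * ∑ i, ∑ j, f i j := by
    simp only [g, sum_add_distrib, sum_const, card_univ, ← mul_sum, nsmul_eq_mul]
    simp only [c]
    ring
  have hdiagsum : ∑ i, g i i = 2 * (c + 1) * ∑ i, a i := by
    simp only [g, a, f, mul_sum]
    refine sum_congr rfl fun i _ => by ring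
  have hle : ∑ i, g i i ≤ ∑ i, ∑ j, g i j :=
    sum_le_sum fun i _ => single_le_sum (fun j _ => hg i j) (mem_univ i)
  have hcQ : 0 ≤ c * ∑ i, ∑ j, f i j := by linarith
  exact nonneg_of_mul_nonneg_right hcQ hc

/-- A real symmetric `m × m` matrix (`m ≥ 2`) with nonnegative
diagonal such that `A_{ii}·A_{jj} ≥ (m-1)²·A_{ij}²` for all `i ≠ j` is positive
semidefinite. -/
theorem posSemidef_of_weighted_minor_condition (m : ℕ) (hm : 2 ≤ m)
    (A : Matrix (Fin m) (Fin m) ℝ) (hsymm : A.IsSymm)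
    (hdiag : ∀ i, 0 ≤ A i i)
    (h : ∀ i j : Fin m, i ≠ j → ((m : ℝ) - 1) ^ 2 * (A i j) ^ 2 ≤ A i i * A j j) :
    A.PosSemidef :=
  posSemidef_of_card_sub_one_sq_mul_sq_le (by rw [Fintype.card_fin]; omega) hsymm hdiag
    (by simpa using h)
end

section
/- Let F : (ℝ ∪ {−∞})^n → (ℝ ∪ {−∞})^n be a Shapley operator as defined by finite action sets A^{(k)}, B^{(i)} and real rewards (each Min action moving to one or two Max states with equal probability). Let K ⊆ [n] be a dominion of Player Max, let F^K denote the Shapley operator of the subgame induced by K, and suppose x̃ ∈ ℝ^K satisfies x̃ ≤ F^K(x̃). Define x ∈ (ℝ ∪ {−∞})^n by x_k = x̃_k for k ∈ K and x_k = −∞ otherwise. Then x ≤ F(x). -/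
/-! The Shapley operator is monotone, and `F^K` evaluates the same expression as `F` with
Max's choices restricted to `B i ∩ K`, where the extension `x` agrees with `x̃`. Restricting the
range of a supremum only lowers it, so `x̃ ≤ F^K(x̃) ≤ F(x)` on `K`, while `x = -∞` off `K`. -/

theorem Finset.sup_inter_le_sup_of_le {ι α : Type*} [SemilatticeSup α] [OrderBot α]
    [DecidableEq ι] {s K : Finset ι} {f g : ι → α} (h : ∀ l ∈ K, f l ≤ g l) :
    (s ∩ K).sup f ≤ s.sup g :=
  Finset.sup_le fun l hl => (h l (mem_inter.1 hl).2).trans (le_sup (mem_inter.1 hl).1)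

theorem dominion_subharmonic_extension_general (n m : ℕ)
    (A : Fin n → Finset (Finset (Fin m))) (hA : ∀ k, (A k).Nonempty)
    (B : Fin m → Finset (Fin n))
    (rMin : Fin n → Finset (Fin m) → ℝ) (rMax : Fin m → Fin n → ℝ)
    (F : (Fin n → EReal) → (Fin n → EReal))
    (hF : ∀ (x : Fin n → EReal) (k : Fin n),
      F x k = (A k).inf' (hA k) (fun a =>
        ((rMin k a : ℝ) : EReal) +
          ((((a.card : ℝ)⁻¹ : ℝ)) : EReal) *
            ∑ i ∈ a, (B i).sup (fun l => ((rMax i l : ℝ) : EReal) + x l)))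
    (K : Finset (Fin n))
    (xt : Fin n → ℝ)
    (hsub : ∀ k ∈ K, ∀ a ∈ A k,
      ((xt k : ℝ) : EReal) ≤
        ((rMin k a : ℝ) : EReal) +
          ((((a.card : ℝ)⁻¹ : ℝ)) : EReal) *
            ∑ i ∈ a, (B i ∩ K).sup (fun l => ((rMax i l : ℝ) : EReal) + ((xt l : ℝ) : EReal))) :
    ∀ k, (if k ∈ K then ((xt k : ℝ) : EReal) else ⊥) ≤
      F (fun k' => if k' ∈ K then ((xt k' : ℝ) : EReal) else ⊥) k := by
  intro k
  by_cases hk : k ∈ K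
  · rw [if_pos hk, hF]
    refine Finset.le_inf' _ _ fun a ha => (hsub k hk a ha).trans ?_
    gcongr with i
    exact Finset.sup_inter_le_sup_of_le fun l hl => by rw [if_pos hl]
  · rw [if_neg hk]
    exact bot_le

/-- Let `F` be the Shapley operator of a stochastic mean payoff
game, `K` a dominion of Player Max, and `F^K` the Shapley operator of the
subgame induced by `K` (Max's actions restricted to `B i ∩ K`).  If
`x̃ ∈ ℝ^K` satisfies `x̃ ≤ F^K(x̃)`, then its extension `x` by `-∞` outside `K`
satisfies `x ≤ F(x)`. -/
theorem dominion_subharmonic_extension (n m : ℕ)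
    (A : Fin n → Finset (Finset (Fin m))) (hA : ∀ k, (A k).Nonempty)
    (hcard : ∀ k, ∀ a ∈ A k, a.card = 1 ∨ a.card = 2)
    (B : Fin m → Finset (Fin n)) (hB : ∀ i, (B i).Nonempty)
    (rMin : Fin n → Finset (Fin m) → ℝ) (rMax : Fin m → Fin n → ℝ)
    (F : (Fin n → EReal) → (Fin n → EReal))
    (hF : ∀ (x : Fin n → EReal) (k : Fin n),
      F x k = (A k).inf' (hA k) (fun a =>
        ((rMin k a : ℝ) : EReal) +
          ((((a.card : ℝ)⁻¹ : ℝ)) : EReal) *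
            ∑ i ∈ a, (B i).sup (fun l => ((rMax i l : ℝ) : EReal) + x l)))
    (K : Finset (Fin n))
    (hdom : ∀ k ∈ K, ∀ a ∈ A k, ∀ i ∈ a, ∃ l ∈ B i, l ∈ K)
    (xt : Fin n → ℝ)
    (hsub : ∀ k ∈ K, ∀ a ∈ A k,
      ((xt k : ℝ) : EReal) ≤
        ((rMin k a : ℝ) : EReal) +
          ((((a.card : ℝ)⁻¹ : ℝ)) : EReal) *
            ∑ i ∈ a, (B i ∩ K).sup (fun l => ((rMax i l : ℝ) : EReal) + ((xt l : ℝ) : EReal))) :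
    ∀ k, (if k ∈ K then ((xt k : ℝ) : EReal) else ⊥) ≤
      F (fun k' => if k' ∈ K then ((xt k' : ℝ) : EReal) else ⊥) k :=
  dominion_subharmonic_extension_general n m A hA B rMin rMax F hF K xt hsub
end
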